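/- arXiv:1912.13264 — 8 statements merged into one kernel-verified Lean document; each statement's English description precedes it below -/
import Mathlib

section
/- Let V : [0,∞) → ℝ be continuous, σ, λ, η ∈ ℝ with η ≠ λ, and let φ : [0,∞) → ℝ be twice continuously differentiable with φ(x) > 0 for all x ≥ 0, satisfying −φ'' + Vφ = λφ on [0,∞) and φ'(0) = σφ(0). Define V_λ(x) = V(x) − 2(d²/dx²) log φ(x). If ψ : [0,∞) → ℝ is twice continuously differentiable and satisfies −ψ'' + Vψ = ηψ on [0,∞) and ψ'(0) = σψ(0), then the function u(x) = −ψ'(x) + (φ'(x)/φ(x))ψ(x) is twice continuously differentiable and satisfies −u'' + V_λ u = ηu on [0,∞) and u(0) = 0. -/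
open MeasureTheory Set

/-- One-sided derivative on `[0, ∞)`. -/
noncomputable def D (f : ℝ → ℝ) : ℝ → ℝ := derivWithin f (Set.Ici 0)

/-!
With `w = φ'/φ`, the equation for `φ` is the Riccati equation `w' + w² = V - λ`. For any
solution `w` of it, `u = -ψ' + wψ` satisfies `u' = (η - λ)ψ - wu`, and differentiating once more
gives `-u'' + (V - 2w')u = ηu`. Since `(log φ)'' = w'`, this is the claim; the Robin conditions
of `φ` and `ψ` with the same `σ` cancel in `u(0)`.
-/

section OneSidedDerivative

variable {f g : ℝ → ℝ} {x : ℝ}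

lemma D_eq_of_hasDerivWithinAt {f' : ℝ} (h : HasDerivWithinAt f f' (Ici 0) x)
    (hx : x ∈ Ici (0 : ℝ)) : D f x = f' :=
  h.derivWithin (uniqueDiffOn_Ici 0 x hx)

lemma D_congr (h : EqOn f g (Ici 0)) (hx : x ∈ Ici (0 : ℝ)) : D f x = D g x :=
  derivWithin_congr h (h hx)

lemma hasDerivWithinAt_D (hf : ContDiffOn ℝ 1 f (Ici 0)) (hx : x ∈ Ici (0 : ℝ)) :
    HasDerivWithinAt f (D f x) (Ici 0) x :=
  (hf.differentiableOn one_ne_zero x hx).hasDerivWithinAt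

lemma ContDiffOn.D {n : WithTop ℕ∞} (hf : ContDiffOn ℝ (n + 1) f (Ici 0)) :
    ContDiffOn ℝ n (D f) (Ici 0) :=
  hf.derivWithin (uniqueDiffOn_Ici 0) le_rfl

lemma contDiffOn_two_of_eqOn_D (hf : ContDiffOn ℝ 1 f (Ici 0)) (hg : ContDiffOn ℝ 1 g (Ici 0))
    (h : EqOn (D f) g (Ici 0)) : ContDiffOn ℝ 2 f (Ici 0) :=
  (contDiffOn_succ_iff_derivWithin (n := 1) (uniqueDiffOn_Ici 0)).2
    ⟨hf.differentiableOn one_ne_zero, by simp, hg.congr h⟩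

end OneSidedDerivative

section LogarithmicDerivative

noncomputable def logD (φ : ℝ → ℝ) (x : ℝ) : ℝ := D φ x / φ x

variable {φ : ℝ → ℝ} {x : ℝ} (hφ : ContDiffOn ℝ 2 φ (Ici 0)) (hφne : ∀ x ∈ Ici (0 : ℝ), φ x ≠ 0)
include hφ hφne

lemma contDiffOn_logD : ContDiffOn ℝ 1 (logD φ) (Ici 0) :=
  hφ.D.div (hφ.of_le one_le_two) hφne

lemma hasDerivWithinAt_logD (hx : x ∈ Ici (0 : ℝ)) :
    HasDerivWithinAt (logD φ) ((D (D φ) x * φ x - D φ x * D φ x) / φ x ^ 2) (Ici 0) x :=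
  (hasDerivWithinAt_D hφ.D hx).div (hasDerivWithinAt_D (hφ.of_le one_le_two) hx) (hφne x hx)

lemma D_log_eq_logD (hx : x ∈ Ici (0 : ℝ)) : D (fun y => Real.log (φ y)) x = logD φ x := by
  refine D_eq_of_hasDerivWithinAt ?_ hx
  rw [logD, div_eq_inv_mul]
  exact (Real.hasDerivAt_log (hφne x hx)).comp_hasDerivWithinAt x
    (hasDerivWithinAt_D (hφ.of_le one_le_two) hx)

lemma D_D_log_eq_D_logD (hx : x ∈ Ici (0 : ℝ)) :
    D (D fun y => Real.log (φ y)) x = D (logD φ) x :=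
  D_congr (fun _ hy => D_log_eq_logD hφ hφne hy) hx

lemma D_logD_add_sq {V : ℝ → ℝ} {lam : ℝ} (hx : x ∈ Ici (0 : ℝ))
    (hode : -(D (D φ) x) + V x * φ x = lam * φ x) :
    D (logD φ) x + logD φ x ^ 2 = V x - lam := by
  have := hφne x hx
  rw [D_eq_of_hasDerivWithinAt (hasDerivWithinAt_logD hφ hφne hx) hx, logD]
  field_simp
  linear_combination (-φ x) * hode

end LogarithmicDerivative

section Commutation

variable {V ψ w u : ℝ → ℝ} {lam η : ℝ}
  (hψ : ContDiffOn ℝ 2 ψ (Ici 0))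
  (hψode : ∀ x ∈ Ici (0 : ℝ), -(D (D ψ) x) + V x * ψ x = η * ψ x)
  (hw : ContDiffOn ℝ 1 w (Ici 0))
  (hric : ∀ x ∈ Ici (0 : ℝ), D w x + w x ^ 2 = V x - lam)
  (hu : EqOn u (fun y => -D ψ y + w y * ψ y) (Ici 0))
include hψ hψode hw hric hu

lemma D_commuted_eq : EqOn (D u) (fun y => (η - lam) * ψ y - w y * u y) (Ici 0) := by
  intro x hx
  have hψ' := hasDerivWithinAt_D (hψ.of_le one_le_two) hx
  have hψ'' := hasDerivWithinAt_D (hψ.D (n := 1)) hx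
  rw [D_congr hu hx]
  refine D_eq_of_hasDerivWithinAt ?_ hx
  show HasDerivWithinAt _ ((η - lam) * ψ x - w x * u x) _ _
  rw [hu hx]
  exact (hψ''.neg.add ((hasDerivWithinAt_D hw hx).mul hψ')).congr_deriv <| by
    linear_combination hψode x hx + ψ x * hric x hx

lemma contDiffOn_commuted : ContDiffOn ℝ 2 u (Ici 0) := by
  have hψ1 : ContDiffOn ℝ 1 ψ (Ici 0) := hψ.of_le one_le_two
  have hu1 : ContDiffOn ℝ 1 u (Ici 0) := (hψ.D.neg.add (hw.mul hψ1)).congr hu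
  exact contDiffOn_two_of_eqOn_D hu1 ((contDiffOn_const.mul hψ1).sub (hw.mul hu1))
    (D_commuted_eq hψ hψode hw hric hu)

lemma commuted_ode {x : ℝ} (hx : x ∈ Ici (0 : ℝ)) :
    -(D (D u) x) + (V x - 2 * D w x) * u x = η * u x := by
  have hDu := D_commuted_eq hψ hψode hw hric hu
  have hu' := hasDerivWithinAt_D ((contDiffOn_commuted hψ hψode hw hric hu).of_le one_le_two) hx
  have hu'' : D (D u) x = (η - lam) * D ψ x - (D w x * u x + w x * D u x) :=
    (D_congr hDu hx).trans <| D_eq_of_hasDerivWithinAt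
      (((hasDerivWithinAt_D (hψ.of_le one_le_two) hx).const_mul (η - lam)).sub
        ((hasDerivWithinAt_D hw hx).mul hu')) hx
  rw [hu'', hDu hx]
  have hux := hu hx
  simp only at hux
  linear_combination (lam - η) * hux - u x * hric x hx

end Commutation

theorem single_commutation_general
    (V φ ψ : ℝ → ℝ) (σ lam η : ℝ)
    (hφ : ContDiffOn ℝ 2 φ (Set.Ici 0))
    (hφpos : ∀ x ∈ Set.Ici (0:ℝ), 0 < φ x)
    (hφode : ∀ x ∈ Set.Ici (0:ℝ), -(D (D φ) x) + V x * φ x = lam * φ x)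
    (hφbc : D φ 0 = σ * φ 0)
    (hψ : ContDiffOn ℝ 2 ψ (Set.Ici 0))
    (hψode : ∀ x ∈ Set.Ici (0:ℝ), -(D (D ψ) x) + V x * ψ x = η * ψ x)
    (hψbc : D ψ 0 = σ * ψ 0)
    (Vlam : ℝ → ℝ) (hVlam : ∀ x ∈ Set.Ici (0:ℝ),
      Vlam x = V x - 2 * D (D (fun y => Real.log (φ y))) x)
    (u : ℝ → ℝ) (hu : ∀ x ∈ Set.Ici (0:ℝ),
      u x = -(D ψ x) + (D φ x / φ x) * ψ x) :
    ContDiffOn ℝ 2 u (Set.Ici 0) ∧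
      (∀ x ∈ Set.Ici (0:ℝ), -(D (D u) x) + Vlam x * u x = η * u x) ∧
      u 0 = 0 := by
  have hφne : ∀ x ∈ Ici (0 : ℝ), φ x ≠ 0 := fun x hx => (hφpos x hx).ne'
  have hw := contDiffOn_logD hφ hφne
  have hric := fun x hx => D_logD_add_sq hφ hφne hx (hφode x hx)
  refine ⟨contDiffOn_commuted hψ hψode hw hric hu, fun x hx => ?_, ?_⟩
  · rw [hVlam x hx, D_D_log_eq_D_logD hφ hφne hx]
    exact commuted_ode hψ hψode hw hric hu hx
  · have := hφne 0 self_mem_Ici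
    rw [hu 0 self_mem_Ici, hψbc, hφbc]
    field_simp
    ring

/-- **Single commutation method**: if `φ > 0` solves `-φ'' + Vφ = λφ` with Robin boundary
condition `φ'(0) = σφ(0)` and `ψ` solves `-ψ'' + Vψ = ηψ` with the same boundary condition,
then `u = -ψ' + (φ'/φ)ψ` solves `-u'' + V_λ u = ηu` with Dirichlet boundary condition,
where `V_λ = V - 2 (log φ)''`. -/
theorem single_commutation
    (V φ ψ : ℝ → ℝ) (σ lam η : ℝ) (hne : η ≠ lam)
    (hV : ContinuousOn V (Set.Ici 0))
    (hφ : ContDiffOn ℝ 2 φ (Set.Ici 0))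
    (hφpos : ∀ x ∈ Set.Ici (0:ℝ), 0 < φ x)
    (hφode : ∀ x ∈ Set.Ici (0:ℝ), -(D (D φ) x) + V x * φ x = lam * φ x)
    (hφbc : D φ 0 = σ * φ 0)
    (hψ : ContDiffOn ℝ 2 ψ (Set.Ici 0))
    (hψode : ∀ x ∈ Set.Ici (0:ℝ), -(D (D ψ) x) + V x * ψ x = η * ψ x)
    (hψbc : D ψ 0 = σ * ψ 0)
    (Vlam : ℝ → ℝ) (hVlam : ∀ x ∈ Set.Ici (0:ℝ),
      Vlam x = V x - 2 * D (D (fun y => Real.log (φ y))) x)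
    (u : ℝ → ℝ) (hu : ∀ x ∈ Set.Ici (0:ℝ),
      u x = -(D ψ x) + (D φ x / φ x) * ψ x) :
    ContDiffOn ℝ 2 u (Set.Ici 0) ∧
      (∀ x ∈ Set.Ici (0:ℝ), -(D (D u) x) + Vlam x * u x = η * u x) ∧
      u 0 = 0 :=
  single_commutation_general V φ ψ σ lam η hφ hφpos hφode hφbc hψ hψode hψbc Vlam hVlam u hu
end

section
/- Let V : [0,∞) → ℝ be continuous, σ ∈ ℝ, λ ≠ η two real numbers, and let φ, ψ : [0,∞) → ℝ be nonzero twice continuously differentiable functions in L²(0,∞) satisfying −φ'' + Vφ = λφ, −ψ'' + Vψ = ηψ on [0,∞), with φ'(0) = σφ(0), ψ'(0) = σψ(0), and assume ∫₀^∞ φ(t)ψ(t) dt = 0. Set γ = −1/‖φ‖², Φ(x) = 1 + γ∫₀ˣ φ(t)² dt, assume Φ(x) > 0 for all x ≥ 0, and let φ̃ = φ/Φ. Then the function ψ_λ(x) = ψ(x) − γφ̃(x)∫₀ˣ ψ(t)φ(t) dt satisfies ψ_λ(0) = ψ(0) and ∫₀^∞ |ψ_λ(x)|² dx = ∫₀^∞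 |ψ(x)|² dx. -/
open MeasureTheory Set

private lemma primCont {f : ℝ → ℝ} (hf : ContinuousOn f (Set.Ici 0)) :
    ContinuousOn (fun x => ∫ t in (0:ℝ)..x, f t) (Set.Ici 0) := by
  intro x hx
  have hx0 : (0:ℝ) ≤ x := hx
  have hint : IntegrableOn f (uIcc (0:ℝ) (x+1)) volume := by
    rw [uIcc_of_le (by linarith)]
    exact (hf.mono Icc_subset_Ici_self).integrableOn_Icc
  have h := intervalIntegral.continuousOn_primitive_interval hint
  rw [uIcc_of_le (by linarith)] at h
  refine (h x ⟨hx0, by linarith⟩).mono_of_mem_nhdsWithin ?_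
  rw [mem_nhdsWithin]
  exact ⟨Iio (x+1), isOpen_Iio, by simp, fun y hy => ⟨hy.2, hy.1.le⟩⟩

private lemma cs_integral {μ : Measure ℝ} {f g : ℝ → ℝ}
    (hf2 : Integrable (fun x => f x ^ 2) μ) (hg2 : Integrable (fun x => g x ^ 2) μ)
    (hfg : Integrable (fun x => f x * g x) μ) :
    (∫ x, f x * g x ∂μ) ^ 2 ≤ (∫ x, f x ^ 2 ∂μ) * (∫ x, g x ^ 2 ∂μ) := by
  have key : ∀ t : ℝ, 0 ≤ (∫ x, f x ^ 2 ∂μ) * (t * t) + (2 * ∫ x, f x * g x ∂μ) * t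
      + ∫ x, g x ^ 2 ∂μ := by
    intro t
    have h1 : Integrable (fun x => t ^ 2 * f x ^ 2) μ := hf2.const_mul _
    have h2 : Integrable (fun x => (2 * t) * (f x * g x)) μ := hfg.const_mul _
    have h3 : Integrable (fun x => (2 * t) * (f x * g x) + g x ^ 2) μ := h2.add hg2
    have h0 : (0:ℝ) ≤ ∫ x, (t * f x + g x) ^ 2 ∂μ :=
      integral_nonneg fun x => sq_nonneg _
    rw [show (fun x => (t * f x + g x) ^ 2)
        = fun x => t ^ 2 * f x ^ 2 + ((2 * t) * (f x * g x) + g x ^ 2) from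
        funext fun x => by ring,
      integral_add h1 h3, integral_add h2 hg2,
      integral_const_mul, integral_const_mul] at h0
    nlinarith [h0]
  have hd := discrim_le_zero key
  rw [discrim] at hd
  nlinarith [hd]

/-- Under the double commutation transformation, the value of the transformed
eigenfunction at the origin and its `L²(0,∞)` norm agree with those of the
original eigenfunction. -/
theorem double_commutation_preserves_norm_and_origin_value
    (V φ ψ : ℝ → ℝ) (σ lam η : ℝ) (hne : lam ≠ η)
    (hV : ContinuousOn V (Set.Ici 0))
    (hφ : ContDiffOn ℝ 2 φ (Set.Ici 0))
    (hφne : ¬ ∀ᵐ x ∂(volume.restrict (Set.Ioi (0:ℝ))), φ x = 0)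
    (hφL2 : MemLp φ 2 (volume.restrict (Set.Ioi (0:ℝ))))
    (hφode : ∀ x ∈ Set.Ici (0:ℝ), -(D (D φ) x) + V x * φ x = lam * φ x)
    (hφbc : D φ 0 = σ * φ 0)
    (hψ : ContDiffOn ℝ 2 ψ (Set.Ici 0))
    (hψne : ¬ ∀ᵐ x ∂(volume.restrict (Set.Ioi (0:ℝ))), ψ x = 0)
    (hψL2 : MemLp ψ 2 (volume.restrict (Set.Ioi (0:ℝ))))
    (hψode : ∀ x ∈ Set.Ici (0:ℝ), -(D (D ψ) x) + V x * ψ x = η * ψ x)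
    (hψbc : D ψ 0 = σ * ψ 0)
    (horth : (∫ t in Set.Ioi (0:ℝ), φ t * ψ t) = 0)
    (γ : ℝ) (hγ : γ = -1 / (∫ x in Set.Ioi (0:ℝ), (φ x) ^ 2))
    (Φ : ℝ → ℝ) (hΦ : ∀ x, Φ x = 1 + γ * ∫ t in (0:ℝ)..x, (φ t) ^ 2)
    (hΦpos : ∀ x ∈ Set.Ici (0:ℝ), 0 < Φ x)
    (φt : ℝ → ℝ) (hφt : ∀ x, φt x = φ x / Φ x)
    (ψlam : ℝ → ℝ) (hψlam : ∀ x,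
      ψlam x = ψ x - γ * φt x * ∫ t in (0:ℝ)..x, ψ t * φ t) :
    ψlam 0 = ψ 0 ∧
      (∫ x in Set.Ioi (0:ℝ), (ψlam x) ^ 2) = ∫ x in Set.Ioi (0:ℝ), (ψ x) ^ 2 := by
  have hzero : ψlam 0 = ψ 0 := by
    rw [hψlam 0]; simp
  refine ⟨hzero, ?_⟩
  set A : ℝ → ℝ := fun x => ∫ t in (0:ℝ)..x, ψ t * φ t with hA
  have hφc : ContinuousOn φ (Ici 0) := hφ.continuousOn
  have hψc : ContinuousOn ψ (Ici 0) := hψ.continuousOn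
  have hψφc : ContinuousOn (fun x => ψ x * φ x) (Ici 0) := hψc.mul hφc
  have hφ2c : ContinuousOn (fun x => φ x ^ 2) (Ici 0) := hφc.pow 2
  -- integrabilities on Ioi 0
  have hφ2i : IntegrableOn (fun x => φ x ^ 2) (Ioi 0) volume := hφL2.integrable_sq
  have hψ2i : IntegrableOn (fun x => ψ x ^ 2) (Ioi 0) volume := hψL2.integrable_sq
  have hψφi : IntegrableOn (fun x => ψ x * φ x) (Ioi 0) volume := by
    refine Integrable.mono' ((hφ2i.add hψ2i).div_const 2) (hψL2.1.mul hφL2.1)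
      (ae_of_all _ fun x => ?_)
    simp only [Pi.add_apply, Pi.div_apply]
    rw [Real.norm_eq_abs, abs_mul]
    nlinarith [sq_abs (ψ x), sq_abs (φ x), sq_nonneg (|ψ x| - |φ x|)]
  set I := ∫ x in Ioi (0:ℝ), φ x ^ 2 with hI
  have hInn : 0 ≤ I := setIntegral_nonneg measurableSet_Ioi fun x _ => sq_nonneg _
  have hIpos : 0 < I := by
    rcases hInn.lt_or_eq with h | h
    · exact h
    exfalso
    apply hφne
    have h0 :=
      (integral_eq_zero_iff_of_nonneg_ae (ae_of_all _ fun x => sq_nonneg (φ x)) hφ2i).mp h.symm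
    filter_upwards [h0] with x hx
    exact pow_eq_zero_iff (two_ne_zero) |>.mp hx
  have hIne : I ≠ 0 := hIpos.ne'
  -- continuity of primitives
  have hAc : ContinuousOn A (Ici 0) := primCont hψφc
  have hPc : ContinuousOn (fun x => ∫ t in (0:ℝ)..x, φ t ^ 2) (Ici 0) := primCont hφ2c
  have hΦfun : Φ = fun x => 1 + γ * ∫ t in (0:ℝ)..x, φ t ^ 2 := funext hΦ
  have hΦc : ContinuousOn Φ (Ici 0) := by
    rw [hΦfun]; exact continuousOn_const.add (continuousOn_const.mul hPc)
  have hΦne : ∀ x ∈ Ici (0:ℝ), Φ x ≠ 0 := fun x hx => (hΦpos x hx).ne'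
  have hψlamc : ContinuousOn ψlam (Ici 0) := by
    have hfun : ψlam = fun x => ψ x - γ * (φ x / Φ x) * A x :=
      funext fun x => by rw [hψlam x, hφt x]
    rw [hfun]
    exact hψc.sub ((continuousOn_const.mul (hφc.div hΦc hΦne)).mul hAc)
  -- derivatives at interior points
  have hAd : ∀ x : ℝ, 0 < x → HasDerivAt A (ψ x * φ x) x := by
    intro x hx
    apply intervalIntegral.integral_hasDerivAt_right
    · exact (hψφc.mono (by rw [uIcc_of_le hx.le]; exact Icc_subset_Ici_self)).intervalIntegrable
    · exact ContinuousOn.stronglyMeasurableAtFilter isOpen_Ioi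
        (hψφc.mono Ioi_subset_Ici_self) x hx
    · exact hψφc.continuousAt (Ici_mem_nhds hx)
  have hPd : ∀ x : ℝ, 0 < x →
      HasDerivAt (fun y => ∫ t in (0:ℝ)..y, φ t ^ 2) (φ x ^ 2) x := by
    intro x hx
    apply intervalIntegral.integral_hasDerivAt_right
    · exact (hφ2c.mono (by rw [uIcc_of_le hx.le]; exact Icc_subset_Ici_self)).intervalIntegrable
    · exact ContinuousOn.stronglyMeasurableAtFilter isOpen_Ioi
        (hφ2c.mono Ioi_subset_Ici_self) x hx
    · exact hφ2c.continuousAt (Ici_mem_nhds hx)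
  have hΦd : ∀ x : ℝ, 0 < x → HasDerivAt Φ (γ * φ x ^ 2) x := by
    intro x hx
    rw [hΦfun]
    exact ((hPd x hx).const_mul γ).const_add 1
  -- key FTC identity
  have key : ∀ R : ℝ, 0 ≤ R →
      (∫ x in (0:ℝ)..R, (ψ x ^ 2 - ψlam x ^ 2)) = γ * (A R) ^ 2 / Φ R := by
    intro R hR
    have hGc : ContinuousOn (fun y => γ * (A y) ^ 2 / Φ y) (Icc 0 R) :=
      ((continuousOn_const.mul (hAc.pow 2)).div hΦc hΦne).mono Icc_subset_Ici_self
    have hGd : ∀ x ∈ Ioo (0:ℝ) R,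
        HasDerivAt (fun y => γ * (A y) ^ 2 / Φ y) (ψ x ^ 2 - ψlam x ^ 2) x := by
      intro x hx
      have hx0 : 0 < x := hx.1
      have hΦx : Φ x ≠ 0 := hΦne x hx0.le
      have h1 : HasDerivAt (fun y => γ * (A y) ^ 2)
          (γ * ((2:ℕ) * A x ^ 1 * (ψ x * φ x))) x := ((hAd x hx0).pow 2).const_mul γ
      have h2 := h1.div (hΦd x hx0) hΦx
      refine HasDerivAt.congr_deriv h2 ?_
      rw [hψlam x, hφt x]
      field_simp
      ring
    have hInt : IntervalIntegrable (fun x => ψ x ^ 2 - ψlam x ^ 2) volume 0 R := by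
      apply ContinuousOn.intervalIntegrable
      rw [uIcc_of_le hR]
      exact ((hψc.pow 2).sub (hψlamc.pow 2)).mono Icc_subset_Ici_self
    rw [intervalIntegral.integral_eq_sub_of_hasDeriv_right_of_le hR hGc
      (fun x hx => (hGd x hx).hasDerivWithinAt) hInt]
    simp [hA]
  -- tail representations
  have hsplit : ∀ (f : ℝ → ℝ), IntegrableOn f (Ioi 0) volume → ∀ R : ℝ, 0 ≤ R →
      (∫ x in Ioi (0:ℝ), f x) = (∫ x in Ioc (0:ℝ) R, f x) + ∫ x in Ioi R, f x := by
    intro f hf R hR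
    rw [← Ioc_union_Ioi_eq_Ioi hR]
    exact setIntegral_union Ioc_disjoint_Ioi_same measurableSet_Ioi
      (hf.mono_set Ioc_subset_Ioi_self) (hf.mono_set (Ioi_subset_Ioi hR))
  have horth' : (∫ x in Ioi (0:ℝ), ψ x * φ x) = 0 := by
    have h := integral_congr_ae (μ := volume.restrict (Ioi (0:ℝ)))
      (ae_of_all _ fun x => mul_comm (ψ x) (φ x))
    rw [h, horth]
  have hAR : ∀ R : ℝ, 0 ≤ R → A R = -∫ x in Ioi R, ψ x * φ x := by
    intro R hR
    have h1 := hsplit _ hψφi R hR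
    have h2 : A R = ∫ x in Ioc (0:ℝ) R, ψ x * φ x := intervalIntegral.integral_of_le hR
    rw [horth'] at h1
    linarith
  have hΦR : ∀ R : ℝ, 0 ≤ R → Φ R = (∫ x in Ioi R, φ x ^ 2) / I := by
    intro R hR
    have h1 := hsplit _ hφ2i R hR
    rw [← hI] at h1
    have h2 : (∫ x in Ioc (0:ℝ) R, φ x ^ 2) = I - ∫ x in Ioi R, φ x ^ 2 := by linarith
    rw [hΦ R, intervalIntegral.integral_of_le hR, h2, hγ]
    field_simp
    ring
  -- bound on the boundary term
  have hbound : ∀ R : ℝ, 0 ≤ R →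
      |γ * (A R) ^ 2 / Φ R| ≤ ∫ x in Ioi R, ψ x ^ 2 := by
    intro R hR
    have hJI : Φ R = (∫ x in Ioi R, φ x ^ 2) / I := hΦR R hR
    have hΦRpos : 0 < Φ R := hΦpos R hR
    have hJpos : 0 < ∫ x in Ioi R, φ x ^ 2 := by
      have h := hΦRpos
      rw [hJI] at h
      have := mul_pos h hIpos
      rwa [div_mul_cancel₀ _ hIne] at this
    have hKnn : 0 ≤ ∫ x in Ioi R, ψ x ^ 2 :=
      setIntegral_nonneg measurableSet_Ioi fun x _ => sq_nonneg _
    have hsub1 : Ioi R ⊆ Ioi (0:ℝ) := Ioi_subset_Ioi hR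
    have hcs := cs_integral (μ := volume.restrict (Ioi R))
      (hψ2i.mono_set hsub1) (hφ2i.mono_set hsub1) (hψφi.mono_set hsub1)
    have heq : γ * (A R) ^ 2 / Φ R
        = -(((∫ x in Ioi R, ψ x * φ x)) ^ 2 / ∫ x in Ioi R, φ x ^ 2) := by
      rw [hAR R hR, hJI, hγ]
      field_simp
    rw [heq, abs_neg, abs_of_nonneg (by positivity), div_le_iff₀ hJpos]
    exact hcs
  -- limits
  have hψto : Filter.Tendsto (fun R => ∫ x in (0:ℝ)..R, ψ x ^ 2) Filter.atTop
      (nhds (∫ x in Ioi (0:ℝ), ψ x ^ 2)) :=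
    intervalIntegral_tendsto_integral_Ioi 0 hψ2i Filter.tendsto_id
  have hKto : Filter.Tendsto (fun R => ∫ x in Ioi R, ψ x ^ 2) Filter.atTop (nhds 0) := by
    have h1 : Filter.Tendsto
        (fun R => (∫ x in Ioi (0:ℝ), ψ x ^ 2) - ∫ x in (0:ℝ)..R, ψ x ^ 2)
        Filter.atTop (nhds ((∫ x in Ioi (0:ℝ), ψ x ^ 2) - ∫ x in Ioi (0:ℝ), ψ x ^ 2)) :=
      tendsto_const_nhds.sub hψto
    rw [sub_self] at h1
    refine h1.congr' ?_
    filter_upwards [Filter.eventually_ge_atTop (0:ℝ)] with R hR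
    have h2 := hsplit _ hψ2i R hR
    rw [intervalIntegral.integral_of_le hR]
    linarith
  have hGto : Filter.Tendsto (fun R => γ * (A R) ^ 2 / Φ R) Filter.atTop (nhds 0) := by
    apply squeeze_zero_norm' _ hKto
    filter_upwards [Filter.eventually_ge_atTop (0:ℝ)] with R hR
    rw [Real.norm_eq_abs]
    exact hbound R hR
  -- interval integrals of ψlam²
  have hsplit_int : ∀ R : ℝ, 0 ≤ R →
      (∫ x in (0:ℝ)..R, ψlam x ^ 2)
        = (∫ x in (0:ℝ)..R, ψ x ^ 2) - γ * (A R) ^ 2 / Φ R := by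
    intro R hR
    have h1 := key R hR
    have hi1 : IntervalIntegrable (fun x => ψ x ^ 2) volume 0 R := by
      apply ContinuousOn.intervalIntegrable
      rw [uIcc_of_le hR]
      exact (hψc.pow 2).mono Icc_subset_Ici_self
    have hi2 : IntervalIntegrable (fun x => ψlam x ^ 2) volume 0 R := by
      apply ContinuousOn.intervalIntegrable
      rw [uIcc_of_le hR]
      exact (hψlamc.pow 2).mono Icc_subset_Ici_self
    rw [intervalIntegral.integral_sub hi1 hi2] at h1
    linarith
  have hψlamto : Filter.Tendsto (fun R => ∫ x in (0:ℝ)..R, ψlam x ^ 2) Filter.atTop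
      (nhds (∫ x in Ioi (0:ℝ), ψ x ^ 2)) := by
    have h1 := hψto.sub hGto
    rw [sub_zero] at h1
    refine h1.congr' ?_
    filter_upwards [Filter.eventually_ge_atTop (0:ℝ)] with R hR
    exact (hsplit_int R hR).symm
  have hψlam2i : IntegrableOn (fun x => ψlam x ^ 2) (Ioi (0:ℝ)) volume := by
    refine integrableOn_Ioi_of_intervalIntegral_norm_tendsto
      (∫ x in Ioi (0:ℝ), ψ x ^ 2) 0 (fun b => ?_) Filter.tendsto_id ?_
    · refine (((hψlamc.pow 2).mono Icc_subset_Ici_self).integrableOn_Icc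
        (b := max b 0)).mono_set ?_
      exact fun x hx => ⟨hx.1.le, le_max_of_le_left hx.2⟩
    · refine hψlamto.congr fun b => ?_
      simp only [id]
      refine intervalIntegral.integral_congr fun x _ => ?_
      rw [Real.norm_eq_abs, abs_of_nonneg (sq_nonneg _)]
  exact tendsto_nhds_unique
    (intervalIntegral_tendsto_integral_Ioi 0 hψlam2i Filter.tendsto_id) hψlamto
end

section
/- Let λ < 0, σ₀ ∈ ℝ, x₀ > 0, and let V : [0,∞) → ℝ be continuous with V(x) = 0 for all x ≥ x₀. Let φ : [0,∞) → ℝ be twice continuously differentiable, positive, in L²(0,∞), satisfying −φ'' + Vφ = λφ on [0,∞), φ'(0) = σ₀φ(0), and φ(x) = C e^{−√|λ| x} for all x ≥ x₀ for some constant C > 0. Set γ = −1/‖φ‖², Φ(x) = 1 + γ∫₀ˣ φ(t)² dt, F = φ'/φ, φ̃ = φ/Φ, F̃ = φ̃'/φ̃. Then: F(0) = σ₀, F(x) = −√|λ| for all x ≥ x₀, F̃(0) = σ₀ + φ(0)²/‖φ‖², F̃(x) = √|λ| for all x ≥ x₀, and consequently the potential V₁ = V − 2(F − F̃)' vanishes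 identically on [x₀,∞). -/
open MeasureTheory Set

/-- Boundary values of `F = φ'/φ` and `F̃ = φ̃'/φ̃` in the double commutation method,
and the resulting vanishing of `V₁ = V - 2(F - F̃)'` on `[x₀, ∞)` (Lemma 1). -/
theorem boundary_values_F_Ft
    (V φ : ℝ → ℝ) (lam σ₀ x₀ C : ℝ) (hlam : lam < 0) (hx₀ : 0 < x₀) (hC : 0 < C)
    (hV : ContinuousOn V (Set.Ici 0))
    (hVsupp : ∀ x, x₀ ≤ x → V x = 0)
    (hφ : ContDiffOn ℝ 2 φ (Set.Ici 0))
    (hφpos : ∀ x ∈ Set.Ici (0:ℝ), 0 < φ x)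
    (hφL2 : MemLp φ 2 (volume.restrict (Set.Ioi (0:ℝ))))
    (hφode : ∀ x ∈ Set.Ici (0:ℝ), -(D (D φ) x) + V x * φ x = lam * φ x)
    (hφbc : D φ 0 = σ₀ * φ 0)
    (hφdecay : ∀ x, x₀ ≤ x → φ x = C * Real.exp (-Real.sqrt |lam| * x))
    (γ : ℝ) (hγ : γ = -1 / (∫ x in Set.Ioi (0:ℝ), (φ x) ^ 2))
    (Φ : ℝ → ℝ) (hΦ : ∀ x, Φ x = 1 + γ * ∫ t in (0:ℝ)..x, (φ t) ^ 2)
    (F : ℝ → ℝ) (hF : ∀ x, F x = D φ x / φ x)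
    (φt : ℝ → ℝ) (hφt : ∀ x, φt x = φ x / Φ x)
    (Ft : ℝ → ℝ) (hFt : ∀ x, Ft x = D φt x / φt x)
    (V₁ : ℝ → ℝ) (hV₁ : ∀ x, V₁ x = V x - 2 * D (fun y => F y - Ft y) x) :
    F 0 = σ₀ ∧
      (∀ x, x₀ ≤ x → F x = -Real.sqrt |lam|) ∧
      Ft 0 = σ₀ + (φ 0) ^ 2 / (∫ x in Set.Ioi (0:ℝ), (φ x) ^ 2) ∧
      (∀ x, x₀ ≤ x → Ft x = Real.sqrt |lam|) ∧
      (∀ x, x₀ ≤ x → V₁ x = 0) := by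
  clear hV hφode
  set s := Real.sqrt |lam| with hs_def
  have hlam0 : (0:ℝ) < |lam| := abs_pos.mpr (ne_of_lt hlam)
  have hs : 0 < s := Real.sqrt_pos.mpr hlam0
  set L := ∫ x in Set.Ioi (0:ℝ), (φ x) ^ 2 with hL_def
  have hcont : ContinuousOn φ (Ici 0) := hφ.continuousOn
  have hsqcont : ContinuousOn (fun t => (φ t) ^ 2) (Ici 0) := hcont.pow 2
  have hint : IntegrableOn (fun x => (φ x) ^ 2) (Ioi 0) volume := hφL2.integrable_sq
  -- explicit improper exponential integral
  have hexpint : ∀ a : ℝ, (∫ t in Ioi a, Real.exp (-(2*s)*t)) = Real.exp (-(2*s)*a) / (2*s) := by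
    intro a
    have hderiv : ∀ t ∈ Ici a,
        HasDerivAt (fun t => -Real.exp (-(2*s)*t) / (2*s)) (Real.exp (-(2*s)*t)) t := by
      intro t _
      have h1 : HasDerivAt (fun t : ℝ => -(2*s)*t) (-(2*s)) t := by
        simpa using (hasDerivAt_id t).const_mul (-(2*s))
      have h2 := (h1.exp.neg).div_const (2*s)
      refine h2.congr_deriv ?_
      have h2s : (2*s) ≠ 0 := by positivity
      rw [div_eq_iff h2s]; ring
    have hT : Filter.Tendsto (fun t => -Real.exp (-(2*s)*t) / (2*s)) Filter.atTop (nhds 0) := by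
      have h1 : Filter.Tendsto (fun t : ℝ => -(2*s)*t) Filter.atTop Filter.atBot :=
        (Filter.tendsto_const_mul_atBot_of_neg (by nlinarith)).mpr Filter.tendsto_id
      have h2 := (Real.tendsto_exp_atBot.comp h1).neg.div_const (2*s)
      simpa using h2
    have := integral_Ioi_of_hasDerivAt_of_tendsto' hderiv
      (exp_neg_integrableOn_Ioi a (by positivity)) hT
    rw [this]
    ring
  have hsq_exp : ∀ y : ℝ, (C * Real.exp (-s*y)) ^ 2 = C^2 * Real.exp (-(2*s)*y) := by
    intro y
    rw [mul_pow, sq (Real.exp (-s*y)), ← Real.exp_add]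
    ring_nf
  have hIoi : ∀ x, x₀ ≤ x → (∫ t in Ioi x, (φ t) ^ 2) = C^2 * Real.exp (-(2*s)*x) / (2*s) := by
    intro x hx
    have hcg : EqOn (fun t => (φ t) ^ 2) (fun t => C^2 * Real.exp (-(2*s)*t)) (Ioi x) := by
      intro t ht
      have : x₀ ≤ t := le_trans hx (le_of_lt ht)
      simp only
      rw [hφdecay t this, hsq_exp t]
    rw [setIntegral_congr_fun measurableSet_Ioi hcg, integral_const_mul, hexpint]
    ring
  have hsplit : ∀ x, 0 ≤ x →
      (∫ t in (0:ℝ)..x, (φ t) ^ 2) + (∫ t in Ioi x, (φ t) ^ 2) = L := by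
    intro x hx
    rw [intervalIntegral.integral_of_le hx, hL_def]
    rw [← setIntegral_union (Set.Ioc_disjoint_Ioi le_rfl) measurableSet_Ioi
      (hint.mono_set (fun y hy => hy.1)) (hint.mono_set (Ioi_subset_Ioi hx)),
      Set.Ioc_union_Ioi_eq_Ioi hx]
  have hIoipos : ∀ x, 0 ≤ x → 0 < ∫ t in Ioi x, (φ t) ^ 2 := by
    intro x hx
    have hM : (0:ℝ) < C^2 * Real.exp (-(2*s)*(max x x₀)) / (2*s) := by positivity
    have hmono : (∫ t in Ioi (max x x₀), (φ t) ^ 2) ≤ ∫ t in Ioi x, (φ t) ^ 2 := by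
      apply setIntegral_mono_set (hint.mono_set (Ioi_subset_Ioi hx))
        (Filter.Eventually.of_forall (fun t => sq_nonneg _))
      exact HasSubset.Subset.eventuallyLE (Ioi_subset_Ioi (le_max_left x x₀))
    calc (0:ℝ) < C^2 * Real.exp (-(2*s)*(max x x₀)) / (2*s) := hM
      _ = ∫ t in Ioi (max x x₀), (φ t) ^ 2 := (hIoi _ (le_max_right x x₀)).symm
      _ ≤ _ := hmono
  have hL : 0 < L := hIoipos 0 le_rfl
  have hΦeq : ∀ x, 0 ≤ x → Φ x = (∫ t in Ioi x, (φ t) ^ 2) / L := by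
    intro x hx
    have h := hsplit x hx
    rw [hΦ, hγ]
    field_simp
    linarith
  have hΦpos : ∀ x, 0 ≤ x → 0 < Φ x := by
    intro x hx
    rw [hΦeq x hx]
    exact div_pos (hIoipos x hx) hL
  have hΦexp : ∀ x, x₀ ≤ x → Φ x = C^2/(2*s*L) * Real.exp (-(2*s)*x) := by
    intro x hx
    rw [hΦeq x (le_trans hx₀.le hx), hIoi x hx]
    ring
  -- differentiability facts
  have hφdiffOn : DifferentiableOn ℝ φ (Ici 0) := hφ.differentiableOn (by norm_num)
  have hφdiffAt : ∀ x : ℝ, 0 < x → DifferentiableAt ℝ φ x := fun x hx =>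
    (hφdiffOn x (le_of_lt hx)).differentiableAt (Ici_mem_nhds hx)
  have hDeq : ∀ (f : ℝ → ℝ) (x : ℝ), 0 < x → D f x = deriv f x := fun f x hx =>
    derivWithin_of_mem_nhds (Ici_mem_nhds hx)
  have hΦderivAt : ∀ x : ℝ, 0 < x → HasDerivAt Φ (γ * (φ x) ^ 2) x := by
    intro x hx
    have hii : IntervalIntegrable (fun t => (φ t) ^ 2) volume 0 x := by
      apply ContinuousOn.intervalIntegrable
      apply hsqcont.mono
      rw [Set.uIcc_of_le hx.le]
      exact fun y hy => hy.1
    have hmeas : StronglyMeasurableAtFilter (fun t => (φ t) ^ 2) (nhds x) volume :=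
      ⟨Ioi 0, Ioi_mem_nhds hx,
        ((hsqcont.mono Ioi_subset_Ici_self).aestronglyMeasurable measurableSet_Ioi)⟩
    have hca : ContinuousAt (fun t => (φ t) ^ 2) x :=
      (hsqcont x (le_of_lt hx)).continuousAt (Ici_mem_nhds hx)
    have h1 := intervalIntegral.integral_hasDerivAt_right hii hmeas hca
    have h2 := (h1.const_mul γ).const_add 1
    have hfun : Φ = fun u => 1 + γ * ∫ t in (0:ℝ)..u, (φ t) ^ 2 := funext hΦ
    rw [hfun]
    exact h2
  have hΦderiv0 : HasDerivWithinAt Φ (γ * (φ 0) ^ 2) (Ici 0) 0 := by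
    have hii : IntervalIntegrable (fun t => (φ t) ^ 2) volume 0 0 := by
      apply ContinuousOn.intervalIntegrable
      apply hsqcont.mono
      simp
    have hmeas : StronglyMeasurableAtFilter (fun t => (φ t) ^ 2) (nhdsWithin 0 (Ioi 0)) volume :=
      ⟨Ioi 0, self_mem_nhdsWithin,
        (hsqcont.mono Ioi_subset_Ici_self).aestronglyMeasurable measurableSet_Ioi⟩
    have h1 := intervalIntegral.integral_hasDerivWithinAt_right (s := Ici (0:ℝ)) (t := Ioi (0:ℝ))
      hii hmeas ((hsqcont 0 self_mem_Ici).mono Ioi_subset_Ici_self)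
    have h2 := (h1.const_mul γ).const_add 1
    have hfun : Φ = fun u => 1 + γ * ∫ t in (0:ℝ)..u, (φ t) ^ 2 := funext hΦ
    rw [hfun]
    exact h2
  have hΦ0 : Φ 0 = 1 := by rw [hΦ]; simp
  have hφtfun : φt = fun x => φ x / Φ x := funext hφt
  have hφne : ∀ x : ℝ, 0 ≤ x → φ x ≠ 0 := fun x hx => (hφpos x hx).ne'
  -- derivative of φ on [x₀, ∞)
  have hgderiv : ∀ x : ℝ, HasDerivAt (fun y => C * Real.exp (-s*y)) (-s * (C * Real.exp (-s*x))) x := by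
    intro x
    have h1 : HasDerivAt (fun y : ℝ => -s*y) (-s) x := by
      simpa using (hasDerivAt_id x).const_mul (-s)
    have h2 := h1.exp.const_mul C
    refine h2.congr_deriv ?_
    ring
  have hderivφ : ∀ x, x₀ ≤ x → deriv φ x = -s * φ x := by
    intro x hxx
    have hx : 0 < x := lt_of_lt_of_le hx₀ hxx
    have hu : UniqueDiffWithinAt ℝ (Ici x₀) x := uniqueDiffOn_Ici x₀ x hxx
    have h1 : HasDerivWithinAt φ (deriv φ x) (Ici x₀) x :=
      (hφdiffAt x hx).hasDerivAt.hasDerivWithinAt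
    have h2 : HasDerivWithinAt φ (-s * φ x) (Ici x₀) x := by
      have hg := (hgderiv x).hasDerivWithinAt (s := Ici x₀)
      have := hg.congr (fun y hy => hφdecay y hy) (hφdecay x hxx)
      rwa [← hφdecay x hxx] at this
    rw [← h1.derivWithin hu, h2.derivWithin hu]
  -- Part 1
  have part1 : F 0 = σ₀ := by
    rw [hF]
    have : D φ 0 = σ₀ * φ 0 := hφbc
    rw [this, mul_div_assoc, div_self (hφne 0 le_rfl), mul_one]
  -- Part 2
  have part2 : ∀ x, x₀ ≤ x → F x = -s := by
    intro x hxx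
    have hx : 0 < x := lt_of_lt_of_le hx₀ hxx
    rw [hF, hDeq φ x hx, hderivφ x hxx, mul_div_assoc,
      div_self (hφne x hx.le), mul_one]
  -- Part 3
  have hφhd0 : HasDerivWithinAt φ (σ₀ * φ 0) (Ici 0) 0 := by
    have := (hφdiffOn 0 self_mem_Ici).hasDerivWithinAt
    rwa [show derivWithin φ (Ici 0) 0 = σ₀ * φ 0 from hφbc] at this
  have hφt0hd : HasDerivWithinAt φt
      ((σ₀ * φ 0 * Φ 0 - φ 0 * (γ * (φ 0) ^ 2)) / (Φ 0) ^ 2) (Ici 0) 0 := by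
    rw [hφtfun]
    exact hφhd0.div hΦderiv0 (by rw [hΦ0]; exact one_ne_zero)
  have hDφt0 : D φt 0 = σ₀ * φ 0 - γ * (φ 0) ^ 3 := by
    have := hφt0hd.derivWithin (uniqueDiffOn_Ici 0 0 self_mem_Ici)
    rw [show D φt 0 = derivWithin φt (Ici 0) 0 from rfl, this, hΦ0]
    ring
  have part3 : Ft 0 = σ₀ + (φ 0) ^ 2 / L := by
    rw [hFt, hDφt0, hφt 0, hΦ0, hγ]
    have h0 := hφne 0 le_rfl
    field_simp
    ring
  -- tilde function on [x₀, ∞)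
  have hKpos : 0 < C^2/(2*s*L) := by positivity
  set K := C^2/(2*s*L) with hK_def
  have hφtexp : ∀ y, x₀ ≤ y → φt y = (C/K) * Real.exp (s*y) := by
    intro y hy
    have h1 : Real.exp (s*y) * Real.exp (-(s*y)) = 1 := by
      rw [← Real.exp_add]; simp
    rw [hφt, hφdecay y hy, hΦexp y hy,
      div_eq_iff (ne_of_gt (mul_pos hKpos (Real.exp_pos _))),
      show -(2*s)*y = -(s*y) + -(s*y) by ring, Real.exp_add,
      show -s*y = -(s*y) by ring]
    have hKK : K * K⁻¹ = 1 := mul_inv_cancel₀ hKpos.ne'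
    linear_combination (-C * Real.exp (-(s*y))) * h1 + (-C * Real.exp (-(s*y)) * Real.exp (s*y) * Real.exp (-(s*y))) * hKK
  have hφtderivAt : ∀ x : ℝ, 0 < x → HasDerivAt φt
      ((deriv φ x * Φ x - φ x * (γ * (φ x) ^ 2)) / (Φ x) ^ 2) x := by
    intro x hx
    rw [hφtfun]
    exact ((hφdiffAt x hx).hasDerivAt).div (hΦderivAt x hx) (hΦpos x hx.le).ne'
  have part4 : ∀ x, x₀ ≤ x → Ft x = s := by
    intro x hxx
    have hx : 0 < x := lt_of_lt_of_le hx₀ hxx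
    have hu : UniqueDiffWithinAt ℝ (Ici x₀) x := uniqueDiffOn_Ici x₀ x hxx
    have hφtpos : 0 < φt x := by
      rw [hφt]; exact div_pos (hφpos x hx.le) (hΦpos x hx.le)
    have h1 : HasDerivWithinAt φt (deriv φt x) (Ici x₀) x :=
      (hφtderivAt x hx).differentiableAt.hasDerivAt.hasDerivWithinAt
    have hg : HasDerivAt (fun y => (C/K) * Real.exp (s*y)) (s * ((C/K) * Real.exp (s*x))) x := by
      have ha : HasDerivAt (fun y : ℝ => s*y) s x := by
        simpa using (hasDerivAt_id x).const_mul s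
      have h2 := ha.exp.const_mul (C/K)
      refine h2.congr_deriv ?_
      ring
    have h2 : HasDerivWithinAt φt (s * φt x) (Ici x₀) x := by
      have hg' := hg.hasDerivWithinAt (s := Ici x₀)
      have := hg'.congr (fun y hy => hφtexp y hy) (hφtexp x hxx)
      rwa [← hφtexp x hxx] at this
    have hd : deriv φt x = s * φt x := by
      rw [← h1.derivWithin hu, h2.derivWithin hu]
    rw [hFt, hDeq φt x hx, hd, mul_div_assoc, div_self hφtpos.ne', mul_one]
  -- Part 5
  have hGH : ∀ y : ℝ, 0 < y → F y - Ft y = γ * (φ y) ^ 2 / Φ y := by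
    intro y hy
    have hΦy : Φ y ≠ 0 := (hΦpos y hy.le).ne'
    have hφy : φ y ≠ 0 := hφne y hy.le
    have hdφt : deriv φt y = (deriv φ y * Φ y - φ y * (γ * (φ y) ^ 2)) / (Φ y) ^ 2 :=
      (hφtderivAt y hy).deriv
    rw [hF, hFt, hDeq φ y hy, hDeq φt y hy, hdφt, hφt]
    field_simp
    ring
  have part5 : ∀ x, x₀ ≤ x → V₁ x = 0 := by
    intro x hxx
    have hx : 0 < x := lt_of_lt_of_le hx₀ hxx
    have hu : UniqueDiffWithinAt ℝ (Ici x₀) x := uniqueDiffOn_Ici x₀ x hxx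
    set H : ℝ → ℝ := fun y => γ * (φ y) ^ 2 / Φ y with hH_def
    have hHdiff : DifferentiableAt ℝ H x := by
      apply DifferentiableAt.div
      · exact ((hφdiffAt x hx).pow 2).const_mul γ
      · exact (hΦderivAt x hx).differentiableAt
      · exact (hΦpos x hx.le).ne'
    have hHconst : ∀ y ∈ Ici x₀, H y = γ * (2*s*L) := by
      intro y hy
      have hey : Real.exp (-(2*s)*y) ≠ 0 := Real.exp_ne_zero _
      simp only [hH_def]
      rw [hφdecay y hy, hΦexp y hy, hsq_exp y, hK_def]
      field_simp
    have h1 : HasDerivWithinAt H (deriv H x) (Ici x₀) x :=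
      hHdiff.hasDerivAt.hasDerivWithinAt
    have h2 : HasDerivWithinAt H 0 (Ici x₀) x := by
      have hc : HasDerivWithinAt (fun _ : ℝ => γ * (2*s*L)) 0 (Ici x₀) x :=
        (hasDerivAt_const x _).hasDerivWithinAt
      exact hc.congr hHconst (hHconst x hxx)
    have hderivH : deriv H x = 0 := by
      rw [← h1.derivWithin hu, h2.derivWithin hu]
    have hGev : (fun y => F y - Ft y) =ᶠ[nhds x] H := by
      apply Filter.eventuallyEq_of_mem (Ioi_mem_nhds hx)
      intro y hy
      exact hGH y hy
    have hDG : D (fun y => F y - Ft y) x = 0 := by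
      rw [hDeq _ x hx, hGev.deriv_eq, hderivH]
    rw [hV₁, hVsupp x hxx, hDG]
    ring
  exact ⟨part1, part2, part3, part4, part5⟩
end

section
/- Let λ < 0, σ₀ ∈ ℝ, x₀ > 0, and let V : [0,∞) → ℝ be continuous with V(x) = 0 for all x ≥ x₀. Let φ : [0,∞) → ℝ be twice continuously differentiable, positive, in L²(0,∞), satisfying −φ'' + Vφ = λφ on [0,∞), φ'(0) = σ₀φ(0), and φ(x) = C e^{−√|λ| x} for all x ≥ x₀ for some constant C > 0. Set γ = −1/‖φ‖², Φ(x) = 1 + γ∫₀ˣ φ(t)² dt, G(x) = γφ(x)²/Φ(x), V₁ = V − 2G', and σ₁ = σ₀ + φ(0)²/‖φ‖². Then ∫₀^∞ V₁(x)² dx = ∫₀^∞ V(x)² dx − (16/3)|λ|^{3/2} + 4|λ|(σ₁ − σ₀) − (4/3)(σ₁³ − σ₀³). -/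
set_option maxHeartbeats 1600000


open MeasureTheory Set

/-- The change of `∫₀^∞ V²` after removing the eigenvalue `lam` by one step of the
double commutation method, where the new potential is `V₁ = V - 2G'`. -/
theorem integral_V1_squared
    (V φ : ℝ → ℝ) (lam σ₀ x₀ C : ℝ) (hlam : lam < 0) (hx₀ : 0 < x₀) (hC : 0 < C)
    (hV : ContinuousOn V (Set.Ici 0))
    (hVsupp : ∀ x, x₀ ≤ x → V x = 0)
    (hφ : ContDiffOn ℝ 2 φ (Set.Ici 0))
    (hφpos : ∀ x ∈ Set.Ici (0:ℝ), 0 < φ x)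
    (hφL2 : MemLp φ 2 (volume.restrict (Set.Ioi (0:ℝ))))
    (hφode : ∀ x ∈ Set.Ici (0:ℝ), -(D (D φ) x) + V x * φ x = lam * φ x)
    (hφbc : D φ 0 = σ₀ * φ 0)
    (hφdecay : ∀ x, x₀ ≤ x → φ x = C * Real.exp (-Real.sqrt |lam| * x))
    (γ : ℝ) (hγ : γ = -1 / (∫ x in Set.Ioi (0:ℝ), (φ x) ^ 2))
    (Φ : ℝ → ℝ) (hΦ : ∀ x, Φ x = 1 + γ * ∫ t in (0:ℝ)..x, (φ t) ^ 2)
    (G : ℝ → ℝ) (hG : ∀ x, G x = γ * (φ x) ^ 2 / Φ x)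
    (V₁ : ℝ → ℝ) (hV₁ : ∀ x, V₁ x = V x - 2 * D G x)
    (σ₁ : ℝ) (hσ₁ : σ₁ = σ₀ + (φ 0) ^ 2 / (∫ x in Set.Ioi (0:ℝ), (φ x) ^ 2)) :
    ∫ x in Set.Ioi (0:ℝ), (V₁ x) ^ 2
      = (∫ x in Set.Ioi (0:ℝ), (V x) ^ 2) - 16/3 * |lam| ^ ((3:ℝ)/2)
        + 4 * |lam| * (σ₁ - σ₀) - 4/3 * (σ₁ ^ 3 - σ₀ ^ 3) := by
  have habs : |lam| = -lam := abs_of_neg hlam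
  have hlamabs : (0:ℝ) < |lam| := abs_pos.mpr (ne_of_lt hlam)
  set k : ℝ := Real.sqrt |lam| with hkdef
  have hk : 0 < k := Real.sqrt_pos.mpr hlamabs
  have hkne : k ≠ 0 := ne_of_gt hk
  have hk2 : k ^ 2 = -lam := by rw [hkdef, Real.sq_sqrt (abs_nonneg lam), habs]
  set N := ∫ x in Set.Ioi (0:ℝ), (φ x) ^ 2 with hN
  have hφcont : ContinuousOn φ (Set.Ici 0) := hφ.continuousOn
  have hφ2int : IntegrableOn (fun t => (φ t) ^ 2) (Ioi 0) := hφL2.integrable_sq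
  have htailint : ∀ x : ℝ, 0 ≤ x → IntegrableOn (fun t => (φ t) ^ 2) (Ioi x) :=
    fun x hx => hφ2int.mono_set (Ioi_subset_Ioi hx)
  have htailpos : ∀ x : ℝ, 0 ≤ x → 0 < ∫ t in Ioi x, (φ t) ^ 2 := by
    intro x hx
    rw [setIntegral_pos_iff_support_of_nonneg_ae
      (Filter.Eventually.of_forall (fun t => sq_nonneg (φ t))) (htailint x hx)]
    have hsub : Ioi x ⊆ Function.support (fun t => (φ t) ^ 2) ∩ Ioi x := by
      intro t ht
      refine ⟨?_, ht⟩
      have h1 : 0 < φ t := hφpos t (le_of_lt (lt_of_le_of_lt hx ht))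
      simp [Function.mem_support]
      positivity
    refine lt_of_lt_of_le ?_ (measure_mono hsub)
    simp [Real.volume_Ioi]
  have hNpos : 0 < N := htailpos 0 le_rfl
  have hNne : N ≠ 0 := ne_of_gt hNpos
  have hΦtail : ∀ x : ℝ, 0 ≤ x → Φ x = (∫ t in Ioi x, (φ t) ^ 2) / N := by
    intro x hx
    have hsplit : N = (∫ t in Ioc 0 x, (φ t) ^ 2) + ∫ t in Ioi x, (φ t) ^ 2 := by
      rw [hN, ← setIntegral_union (Ioc_disjoint_Ioi le_rfl) measurableSet_Ioi
        (hφ2int.mono_set Ioc_subset_Ioi_self) (htailint x hx), Ioc_union_Ioi_eq_Ioi hx]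
    have h0x : ∫ t in (0:ℝ)..x, (φ t) ^ 2 = ∫ t in Ioc 0 x, (φ t) ^ 2 :=
      intervalIntegral.integral_of_le hx
    rw [hΦ x, h0x, hγ]
    field_simp
    linarith [hsplit]
  have hΦpos : ∀ x ∈ Ici (0:ℝ), 0 < Φ x := fun x hx => by
    rw [hΦtail x hx]; exact div_pos (htailpos x hx) hNpos
  have hΦne : ∀ x ∈ Ici (0:ℝ), Φ x ≠ 0 := fun x hx => ne_of_gt (hΦpos x hx)
  have htailexp : ∀ x : ℝ, x₀ ≤ x → (∫ t in Ioi x, (φ t) ^ 2) = (φ x) ^ 2 / (2 * k) := by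
    intro x hx
    have h2k : (0:ℝ) < 2 * k := by positivity
    have hcong : EqOn (fun t => (φ t) ^ 2) (fun t => C ^ 2 * Real.exp (-(2 * k) * t)) (Ioi x) := by
      intro t ht
      have hxt : x₀ ≤ t := le_trans hx (le_of_lt ht)
      simp only
      rw [hφdecay t hxt, show -(2 * k) * t = -k * t + -k * t by ring, Real.exp_add]
      ring
    rw [setIntegral_congr_fun measurableSet_Ioi hcong]
    have hderiv : ∀ t ∈ Ioi x, HasDerivAt (fun t => -(C ^ 2 / (2 * k)) * Real.exp (-(2 * k) * t))
        (C ^ 2 * Real.exp (-(2 * k) * t)) t := by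
      intro t _
      have h1 : HasDerivAt (fun t : ℝ => -(2 * k) * t) (-(2 * k)) t := by
        simpa using (hasDerivAt_id t).const_mul (-(2 * k))
      have h2 := (h1.exp).const_mul (-(C ^ 2 / (2 * k)))
      refine h2.congr_deriv ?_
      field_simp
    have hint : IntegrableOn (fun t => C ^ 2 * Real.exp (-(2 * k) * t)) (Ioi x) :=
      (exp_neg_integrableOn_Ioi x h2k).const_mul (C ^ 2)
    have htend : Filter.Tendsto (fun t => -(C ^ 2 / (2 * k)) * Real.exp (-(2 * k) * t))
        Filter.atTop (nhds 0) := by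
      have h1 : Filter.Tendsto (fun t : ℝ => 2 * k * t) Filter.atTop Filter.atTop :=
        Filter.Tendsto.const_mul_atTop h2k Filter.tendsto_id
      have h2 := Real.tendsto_exp_neg_atTop_nhds_zero.comp h1
      have h3 : Filter.Tendsto (fun t : ℝ => Real.exp (-(2 * k) * t)) Filter.atTop (nhds 0) := by
        refine h2.congr (fun t => ?_)
        simp [Function.comp, mul_assoc]
      simpa using h3.const_mul (-(C ^ 2 / (2 * k)))
    have hFTC := integral_Ioi_of_hasDerivAt_of_tendsto
      (Continuous.continuousWithinAt (by fun_prop)) hderiv hint htend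
    rw [hFTC, hφdecay x hx, mul_pow]
    have hexp : Real.exp (-k * x) ^ 2 = Real.exp (-(2 * k) * x) := by
      rw [show -(2 * k) * x = -k * x + -k * x by ring, Real.exp_add, sq]
    rw [hexp]
    field_simp
    ring
  have hDφdecay : ∀ x : ℝ, x₀ < x → D φ x = -k * φ x := by
    intro x hx
    have hx0 : (0:ℝ) < x := lt_trans hx₀ hx
    have hnh : Ici (0:ℝ) ∈ nhds x := Ici_mem_nhds hx0
    have hev : φ =ᶠ[nhds x] (fun t => C * Real.exp (-k * t)) := by
      filter_upwards [Ioi_mem_nhds hx] with t ht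
      exact hφdecay t (le_of_lt ht)
    have h1 : HasDerivAt (fun t : ℝ => C * Real.exp (-k * t)) (C * (Real.exp (-k * x) * -k)) x := by
      have h0 : HasDerivAt (fun t : ℝ => -k * t) (-k) x := by
        simpa using (hasDerivAt_id x).const_mul (-k)
      exact (h0.exp).const_mul C
    show derivWithin φ (Set.Ici 0) x = -k * φ x
    rw [derivWithin_of_mem_nhds hnh, hev.deriv_eq, h1.deriv, hφdecay x (le_of_lt hx)]
    ring
  have hUD : UniqueDiffOn ℝ (Ici (0:ℝ)) := uniqueDiffOn_Ici 0
  have hφdiff : ∀ x ∈ Ici (0:ℝ), HasDerivWithinAt φ (D φ x) (Ici 0) x := by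
    intro x hx
    exact ((hφ.differentiableOn (by norm_num)) x hx).hasDerivWithinAt
  have hφ'cd : ContDiffOn ℝ 1 (D φ) (Set.Ici 0) := hφ.derivWithin hUD (by norm_num)
  have hDφcont : ContinuousOn (D φ) (Set.Ici 0) := hφ'cd.continuousOn
  have hDφdiff : ∀ x ∈ Ici (0:ℝ), HasDerivWithinAt (D φ) ((V x - lam) * φ x) (Ici 0) x := by
    intro x hx
    have h1 := ((hφ'cd.differentiableOn (by norm_num)) x hx).hasDerivWithinAt
    have h2 : D (D φ) x = (V x - lam) * φ x := by linear_combination -(hφode x hx)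
    rw [← h2]
    exact h1
  have hmeas2 : AEStronglyMeasurable (fun t => (φ t) ^ 2) (volume.restrict (Ici (0:ℝ))) :=
    (hφcont.pow 2).aestronglyMeasurable measurableSet_Ici
  have hprim : ∀ x ∈ Ici (0:ℝ),
      HasDerivWithinAt (fun y => ∫ t in (0:ℝ)..y, (φ t) ^ 2) ((φ x) ^ 2) (Ici 0) x := by
    intro x hx
    have hx0 : (0:ℝ) ≤ x := hx
    have hii : IntervalIntegrable (fun t => (φ t) ^ 2) volume 0 x := by
      apply ContinuousOn.intervalIntegrable
      rw [uIcc_of_le hx0]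
      exact (hφcont.pow 2).mono Icc_subset_Ici_self
    rcases eq_or_lt_of_le hx0 with h0 | h0
    · rw [← h0]
      rw [← h0] at hii
      exact intervalIntegral.integral_hasDerivWithinAt_right hii
        ⟨Ioi 0, self_mem_nhdsWithin, hφ2int.aestronglyMeasurable⟩
        (((hφcont.pow 2) 0 self_mem_Ici).mono Ioi_subset_Ici_self)
    · have hca : ContinuousAt (fun t => (φ t) ^ 2) x :=
        ((hφcont.pow 2) x hx).continuousAt (Ici_mem_nhds h0)
      have := intervalIntegral.integral_hasDerivAt_right hii
        ⟨Ioi 0, Ioi_mem_nhds h0, hφ2int.aestronglyMeasurable⟩ hca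
      exact this.hasDerivWithinAt
  have hΦfun : Φ = fun y => 1 + γ * ∫ t in (0:ℝ)..y, (φ t) ^ 2 := funext hΦ
  have hΦdiff : ∀ x ∈ Ici (0:ℝ), HasDerivWithinAt Φ (γ * (φ x) ^ 2) (Ici 0) x := by
    intro x hx
    rw [hΦfun]
    exact ((hprim x hx).const_mul γ).const_add 1
  have hΦcont : ContinuousOn Φ (Ici 0) := fun x hx => (hΦdiff x hx).continuousWithinAt
  have hGfun : G = fun y => γ * (φ y) ^ 2 / Φ y := funext hG
  have hGl : ∀ x ∈ Ici (0:ℝ), HasDerivWithinAt (fun y => γ * (φ y) ^ 2 / Φ y)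
      ((2 * γ * φ x * D φ x * Φ x - γ ^ 2 * (φ x) ^ 4) / (Φ x) ^ 2) (Ici 0) x := by
    intro x hx
    have h1 := (((hφdiff x hx).pow 2).const_mul γ).div (hΦdiff x hx) (hΦne x hx)
    refine h1.congr_deriv ?_
    simp only [Pi.pow_apply]
    push_cast
    ring
  have hDGform : ∀ x ∈ Ici (0:ℝ),
      D G x = (2 * γ * φ x * D φ x * Φ x - γ ^ 2 * (φ x) ^ 4) / (Φ x) ^ 2 := by
    intro x hx
    have h1 : HasDerivWithinAt G
        ((2 * γ * φ x * D φ x * Φ x - γ ^ 2 * (φ x) ^ 4) / (Φ x) ^ 2) (Ici 0) x := by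
      rw [hGfun]; exact hGl x hx
    exact h1.derivWithin (hUD x hx)
  set F : ℝ → ℝ := fun y =>
    4 / 3 * (D φ y / φ y - γ * (φ y) ^ 2 / Φ y) ^ 3
      - 4 * k ^ 2 * (D φ y / φ y - γ * (φ y) ^ 2 / Φ y)
      + (4 * k ^ 2 * (D φ y / φ y) - 4 / 3 * (D φ y / φ y) ^ 3) with hFdef
  have hFd : ∀ x ∈ Ici (0:ℝ), HasDerivWithinAt F ((V₁ x) ^ 2 - (V x) ^ 2) (Ici 0) x := by
    intro x hx
    have hax : φ x ≠ 0 := ne_of_gt (hφpos x hx)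
    have hPx : Φ x ≠ 0 := hΦne x hx
    have hwd := (hDφdiff x hx).div (hφdiff x hx) hax
    have hsd := hwd.sub (hGl x hx)
    have h1 := ((hsd.pow 3).const_mul (4 / 3 : ℝ)).sub (hsd.const_mul (4 * k ^ 2))
    have h2 := (hwd.const_mul (4 * k ^ 2)).sub ((hwd.pow 3).const_mul (4 / 3 : ℝ))
    have h3 := h1.add h2
    rw [hFdef]
    refine h3.congr_deriv ?_
    simp only [Pi.sub_apply, Pi.div_apply, Pi.pow_apply]
    rw [hV₁ x, hDGform x hx, hk2]
    push_cast
    field_simp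
    ring
  have hDGcont : ContinuousOn (fun x => D G x) (Ici 0) := by
    have hnum : ContinuousOn (fun x => 2 * γ * φ x * D φ x * Φ x - γ ^ 2 * (φ x) ^ 4) (Ici 0) :=
      (((continuousOn_const.mul hφcont).mul hDφcont).mul hΦcont).sub
        (continuousOn_const.mul (hφcont.pow 4))
    exact ContinuousOn.congr (hnum.div (hΦcont.pow 2)
      (fun x hx => pow_ne_zero 2 (hΦne x hx))) hDGform
  have hV₁cont : ContinuousOn V₁ (Ici 0) :=
    ContinuousOn.congr (hV.sub (continuousOn_const.mul hDGcont)) (fun x _ => hV₁ x)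
  have hV₁zero : ∀ x : ℝ, x₀ < x → V₁ x = 0 := by
    intro x hx
    have hx0 : x ∈ Ici (0:ℝ) := le_of_lt (lt_trans hx₀ hx)
    have hax : φ x ≠ 0 := ne_of_gt (hφpos x hx0)
    rw [hV₁ x, hVsupp x (le_of_lt hx), hDGform x hx0, hDφdecay x hx, hΦtail x hx0,
      htailexp x (le_of_lt hx), hγ]
    field_simp
    ring
  have hVsq_int : IntegrableOn (fun x => (V x) ^ 2) (Ioi 0) := by
    have h1 : IntegrableOn (fun x => (V x) ^ 2) (Ioc 0 x₀) :=
      (((hV.pow 2).mono Icc_subset_Ici_self).integrableOn_Icc).mono_set Ioc_subset_Icc_self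
    have h2 : IntegrableOn (fun x => (V x) ^ 2) (Ioi x₀) := by
      have heq : EqOn (fun x => (V x) ^ 2) (fun _ => (0:ℝ)) (Ioi x₀) := fun x hx => by
        simp [hVsupp x (le_of_lt hx)]
      exact (integrableOn_congr_fun heq measurableSet_Ioi).mpr (integrableOn_zero)
    have h3 := h1.union h2
    rwa [Ioc_union_Ioi_eq_Ioi (le_of_lt hx₀)] at h3
  have hV₁sq_int : IntegrableOn (fun x => (V₁ x) ^ 2) (Ioi 0) := by
    have h1 : IntegrableOn (fun x => (V₁ x) ^ 2) (Ioc 0 x₀) :=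
      (((hV₁cont.pow 2).mono Icc_subset_Ici_self).integrableOn_Icc).mono_set Ioc_subset_Icc_self
    have h2 : IntegrableOn (fun x => (V₁ x) ^ 2) (Ioi x₀) := by
      have heq : EqOn (fun x => (V₁ x) ^ 2) (fun _ => (0:ℝ)) (Ioi x₀) := fun x hx => by
        simp [hV₁zero x hx]
      exact (integrableOn_congr_fun heq measurableSet_Ioi).mpr (integrableOn_zero)
    have h3 := h1.union h2
    rwa [Ioc_union_Ioi_eq_Ioi (le_of_lt hx₀)] at h3
  have hsubint : IntegrableOn (fun x => (V₁ x) ^ 2 - (V x) ^ 2) (Ioi 0) :=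
    hV₁sq_int.sub hVsq_int
  have hsplitint : ∫ x in Ioi (0:ℝ), ((V₁ x) ^ 2 - (V x) ^ 2)
      = (∫ x in Ioi (0:ℝ), (V₁ x) ^ 2) - ∫ x in Ioi (0:ℝ), (V x) ^ 2 :=
    integral_sub hV₁sq_int hVsq_int
  set b : ℝ := x₀ + 1 with hbdef
  have hbx : x₀ < b := by rw [hbdef]; linarith
  have hb0 : (0:ℝ) ≤ b := by rw [hbdef]; linarith
  have hIoi : ∫ x in Ioi (0:ℝ), ((V₁ x) ^ 2 - (V x) ^ 2)
      = ∫ x in Ioc (0:ℝ) b, ((V₁ x) ^ 2 - (V x) ^ 2) := by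
    rw [← Ioc_union_Ioi_eq_Ioi hb0,
      setIntegral_union (Ioc_disjoint_Ioi le_rfl) measurableSet_Ioi
        (hsubint.mono_set (by rw [← Ioc_union_Ioi_eq_Ioi hb0]; exact subset_union_left))
        (hsubint.mono_set (by rw [← Ioc_union_Ioi_eq_Ioi hb0]; exact subset_union_right))]
    have hz : ∫ x in Ioi b, ((V₁ x) ^ 2 - (V x) ^ 2) = 0 := by
      have heq : EqOn (fun x => (V₁ x) ^ 2 - (V x) ^ 2) (fun _ => (0:ℝ)) (Ioi b) := by
        intro x hx
        simp [hV₁zero x (lt_trans hbx hx), hVsupp x (le_of_lt (lt_trans hbx hx))]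
      rw [setIntegral_congr_fun measurableSet_Ioi heq]
      exact integral_zero _ _
    rw [hz, add_zero]
  have hIoc : ∫ x in Ioc (0:ℝ) b, ((V₁ x) ^ 2 - (V x) ^ 2) = F b - F 0 := by
    rw [← intervalIntegral.integral_of_le hb0]
    apply intervalIntegral.integral_eq_sub_of_hasDeriv_right_of_le hb0
    · have hFcont : ContinuousOn F (Ici 0) := fun x hx => (hFd x hx).continuousWithinAt
      exact hFcont.mono Icc_subset_Ici_self
    · intro x hx
      exact (hFd x (le_of_lt hx.1)).mono (fun y hy => le_of_lt (lt_trans hx.1 hy))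
    · apply ContinuousOn.intervalIntegrable
      rw [uIcc_of_le hb0]
      exact (((hV₁cont.mono Icc_subset_Ici_self).pow 2).sub
        ((hV.mono Icc_subset_Ici_self).pow 2))
  have hbpos : (0:ℝ) < b := lt_of_lt_of_le hx₀ (le_of_lt hbx)
  have haxb : φ b ≠ 0 := ne_of_gt (hφpos b (le_of_lt hbpos))
  have hwb : D φ b / φ b = -k := by
    rw [hDφdecay b hbx]
    field_simp
  have hGb : γ * (φ b) ^ 2 / Φ b = -(2 * k) := by
    rw [hΦtail b (le_of_lt hbpos), htailexp b (le_of_lt hbx), hγ]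
    field_simp
  have hFb : F b = -(16 / 3) * k ^ 3 := by
    rw [hFdef]
    simp only
    rw [hwb, hGb]
    ring
  have hφ0 : φ 0 ≠ 0 := ne_of_gt (hφpos 0 self_mem_Ici)
  have hΦ0 : Φ 0 = 1 := by rw [hΦ 0, intervalIntegral.integral_same]; ring
  have hw0 : D φ 0 / φ 0 = σ₀ := by rw [hφbc]; field_simp
  have hG0 : γ * (φ 0) ^ 2 / Φ 0 = σ₀ - σ₁ := by
    rw [hΦ0, hγ, hσ₁]
    field_simp
    ring
  have hF0 : F 0 = 4 / 3 * σ₁ ^ 3 - 4 * k ^ 2 * σ₁ + 4 * k ^ 2 * σ₀ - 4 / 3 * σ₀ ^ 3 := by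
    rw [hFdef]
    simp only
    rw [hw0, hG0]
    ring
  have hkey : (∫ x in Ioi (0:ℝ), (V₁ x) ^ 2) - ∫ x in Ioi (0:ℝ), (V x) ^ 2
      = -(16 / 3) * k ^ 3 - (4 / 3 * σ₁ ^ 3 - 4 * k ^ 2 * σ₁ + 4 * k ^ 2 * σ₀ - 4 / 3 * σ₀ ^ 3) := by
    rw [← hsplitint, hIoi, hIoc, hFb, hF0]
  have hrpow : |lam| ^ ((3:ℝ) / 2) = k ^ 3 := by
    rw [hkdef, Real.sqrt_eq_rpow, ← Real.rpow_natCast (|lam| ^ ((1:ℝ) / 2)) 3,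
      ← Real.rpow_mul (abs_nonneg lam)]
    norm_num
  have hk2' : k ^ 2 = |lam| := by rw [hk2, habs]
  rw [hrpow, ← hk2']
  linarith [hkey]
end

section
/- Let N ≥ 1, let μ₁ ≥ μ₂ ≥ … ≥ μ_N > 0 be real numbers, and let σ₀ ≤ σ₁ ≤ … ≤ σ_N be real numbers with 2√μ₁ + σ_N ≥ 0. Then (3/4)∑_{j=1}^N μ_j(σ_j − σ_{j−1}) + (1/4)(σ₀³ − σ_N³) ≤ (1/2)μ₁^{3/2} − (3/4)μ₁σ₀ + (1/4)σ₀³. -/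
/-!
Since `μ j ≤ μ 1` and the increments `σ j - σ (j - 1)` are nonnegative, the sum is at most
`μ 1 * (σ N - σ 0)` by telescoping. With `t = √(μ 1)` and `s = σ N` what remains is
`3 t² s ≤ 2 t³ + s³`, which holds because the difference is `(t - s)² (2 t + s)`.
-/

open Finset

theorem Finset.sum_Icc_one_sub_pred {G : Type*} [AddCommGroup G] (f : ℕ → G) (n : ℕ) :
    ∑ j ∈ Icc 1 n, (f j - f (j - 1)) = f n - f 0 := by
  induction n with
  | zero => simp
  | succ n ih => rw [sum_Icc_succ_top (Nat.le_add_left 1 n), ih, Nat.add_sub_cancel]; abel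

theorem Finset.sum_mul_sub_pred_le {R : Type*} [CommRing R] [PartialOrder R] [IsOrderedRing R]
    {N : ℕ} {μ σ : ℕ → R} {M : R} (hμ : ∀ j ∈ Icc 1 N, μ j ≤ M)
    (hσ : ∀ j < N, σ j ≤ σ (j + 1)) :
    ∑ j ∈ Icc 1 N, μ j * (σ j - σ (j - 1)) ≤ M * (σ N - σ 0) :=
  calc ∑ j ∈ Icc 1 N, μ j * (σ j - σ (j - 1))
      ≤ ∑ j ∈ Icc 1 N, M * (σ j - σ (j - 1)) := by
        refine sum_le_sum fun j hj ↦ mul_le_mul_of_nonneg_right (hμ j hj) ?_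
        obtain ⟨hj1, hjN⟩ := mem_Icc.mp hj
        have := hσ (j - 1) (by omega)
        rwa [Nat.sub_add_cancel hj1, ← sub_nonneg] at this
    _ = M * (σ N - σ 0) := by rw [← mul_sum, sum_Icc_one_sub_pred]

theorem three_mul_sq_mul_le_two_mul_cube_add_cube {R : Type*} [CommRing R] [LinearOrder R]
    [IsStrictOrderedRing R] {t s : R} (h : 0 ≤ 2 * t + s) :
    3 * t ^ 2 * s ≤ 2 * t ^ 3 + s ^ 3 := by
  have key : 2 * t ^ 3 + s ^ 3 - 3 * t ^ 2 * s = (t - s) ^ 2 * (2 * t + s) := by ring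
  exact sub_nonneg.mp (key ▸ mul_nonneg (sq_nonneg _) h)

/-- The elementary real-number inequality showing that the improved Lieb–Thirring
inequality implies the inequality of Exner, Laptev and Usman. Here `μ 1 ≥ … ≥ μ N > 0`
and `σ 0 ≤ σ 1 ≤ … ≤ σ N` with `2√(μ 1) + σ N ≥ 0`. -/
theorem key_real_inequality
    (N : ℕ) (hN : 1 ≤ N) (μ σ : ℕ → ℝ)
    (hμdec : ∀ j, 1 ≤ j → j < N → μ (j + 1) ≤ μ j)
    (hμpos : ∀ j, 1 ≤ j → j ≤ N → 0 < μ j)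
    (hσmono : ∀ j, j < N → σ j ≤ σ (j + 1))
    (hsum : 0 ≤ 2 * Real.sqrt (μ 1) + σ N) :
    3/4 * (∑ j ∈ Finset.Icc 1 N, μ j * (σ j - σ (j - 1)))
        + 1/4 * ((σ 0) ^ 3 - (σ N) ^ 3)
      ≤ 1/2 * μ 1 ^ ((3:ℝ)/2) - 3/4 * μ 1 * σ 0 + 1/4 * (σ 0) ^ 3 := by
  have hμ1 : 0 ≤ μ 1 := (hμpos 1 le_rfl hN).le
  have hanti : AntitoneOn μ (Set.Icc 1 N) :=
    antitoneOn_of_add_one_le Set.ordConnected_Icc fun j _ hj hj' ↦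
      hμdec j hj.1 (Nat.lt_of_succ_le hj'.2)
  have hmax : ∀ j ∈ Icc 1 N, μ j ≤ μ 1 := fun j hj ↦
    hanti ⟨le_rfl, hN⟩ (mem_Icc.mp hj) (mem_Icc.mp hj).1
  have hpow : μ 1 ^ ((3:ℝ)/2) = √(μ 1) ^ 3 := by
    rw [Real.rpow_div_two_eq_sqrt _ hμ1]; norm_cast
  rw [hpow]
  linear_combination 3/4 * sum_mul_sub_pred_le hmax hσmono
    + 1/4 * three_mul_sq_mul_le_two_mul_cube_add_cube hsum
    - 3/4 * σ N * Real.sq_sqrt hμ1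
end

section
/- Let ω ∈ ℝ and γ > 0. Define Φ(x) = 1 + γ∫₀ˣ cosh²(ωt) dt, V(x) = −2 (d/dx)(γcosh²(ωx)/Φ(x)), and φ̃(x) = cosh(ωx)/Φ(x) for x ≥ 0. Then φ̃ is a nonzero element of L²(0,∞), is twice continuously differentiable, satisfies −φ̃'' + Vφ̃ = −ω²φ̃ on [0,∞), and satisfies the Robin boundary condition φ̃'(0) + γφ̃(0) = 0. -/
open MeasureTheory Set
open Filter Topology

noncomputable def Phi (w g : ℝ) (x : ℝ) : ℝ := 1 + g * ∫ t in (0:ℝ)..x, Real.cosh (w * t) ^ 2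

lemma cont_ch2 (w g : ℝ) : Continuous (fun t : ℝ => g * Real.cosh (w * t) ^ 2) := by
  continuity

lemma hasDerivAt_Phi (w g : ℝ) (x : ℝ) :
    HasDerivAt (Phi w g) (g * Real.cosh (w * x) ^ 2) x := by
  have hc : Continuous (fun t : ℝ => Real.cosh (w * t) ^ 2) := by continuity
  have h : HasDerivAt (fun y : ℝ => ∫ t in (0:ℝ)..y, Real.cosh (w * t) ^ 2)
      (Real.cosh (w * x) ^ 2) x := by
    exact intervalIntegral.integral_hasDerivAt_right (hc.intervalIntegrable 0 x)
      hc.stronglyMeasurable.stronglyMeasurableAtFilter hc.continuousAt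
  exact (h.const_mul g).const_add 1

lemma Phi_zero (w g : ℝ) : Phi w g 0 = 1 := by simp [Phi]

lemma Phi_ge (w : ℝ) {g : ℝ} (hg : 0 < g) {x : ℝ} (hx : 0 ≤ x) :
    1 + g * x ≤ Phi w g x := by
  have h1 : ∀ t : ℝ, (1:ℝ) ≤ Real.cosh (w * t) ^ 2 := fun t => by
    nlinarith [Real.one_le_cosh (w * t)]
  have hc : Continuous (fun t : ℝ => Real.cosh (w * t) ^ 2) := by continuity
  have : ∫ t in (0:ℝ)..x, (1:ℝ) ≤ ∫ t in (0:ℝ)..x, Real.cosh (w * t) ^ 2 := by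
    apply intervalIntegral.integral_mono_on hx (intervalIntegrable_const)
      (hc.intervalIntegrable 0 x) (fun t _ => h1 t)
  simp only [intervalIntegral.integral_const, smul_eq_mul, mul_one, sub_zero] at this
  have := mul_le_mul_of_nonneg_left this hg.le
  simp [Phi]; linarith

lemma one_le_Phi (w : ℝ) {g : ℝ} (hg : 0 < g) {x : ℝ} (hx : 0 ≤ x) : 1 ≤ Phi w g x := by
  have := Phi_ge w hg hx
  nlinarith

lemma Phi_pos (w : ℝ) {g : ℝ} (hg : 0 < g) {x : ℝ} (hx : 0 ≤ x) : 0 < Phi w g x :=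
  lt_of_lt_of_le one_pos (one_le_Phi w hg hx)

lemma contDiff_ch (w : ℝ) : ContDiff ℝ 2 (fun x : ℝ => Real.cosh (w * x)) :=
  (Real.contDiff_cosh.of_le le_top).comp ((contDiff_const.mul contDiff_id).of_le le_top)

lemma contDiff_Phi (w g : ℝ) : ContDiff ℝ 2 (Phi w g) := by
  have hd : deriv (Phi w g) = fun x => g * Real.cosh (w * x) ^ 2 :=
    funext fun x => (hasDerivAt_Phi w g x).deriv
  rw [show ((2:WithTop ℕ∞)) = 1 + 1 from rfl]
  refine contDiff_succ_iff_deriv.2 ⟨fun x => (hasDerivAt_Phi w g x).differentiableAt, ?_, ?_⟩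
  · intro h; simp at h
  · rw [hd]
    exact contDiff_const.mul (((contDiff_ch w).of_le one_le_two).pow 2)

lemma tendsto_Phi (w : ℝ) {g : ℝ} (hg : 0 < g) :
    Filter.Tendsto (Phi w g) Filter.atTop Filter.atTop := by
  have h1 : Filter.Tendsto (fun x : ℝ => 1 + g * x) Filter.atTop Filter.atTop :=
    Filter.tendsto_atTop_add_const_left _ 1 (Filter.Tendsto.const_mul_atTop hg Filter.tendsto_id)
  apply Filter.tendsto_atTop_mono' _ _ h1
  filter_upwards [Filter.eventually_ge_atTop (0:ℝ)] with x hx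
  exact Phi_ge w hg hx

lemma hasDerivAt_ch (w x : ℝ) :
    HasDerivAt (fun y : ℝ => Real.cosh (w * y)) (w * Real.sinh (w * x)) x := by
  have := ((hasDerivAt_id' x).const_mul w).cosh
  convert this using 1; ring

lemma hasDerivAt_sh (w x : ℝ) :
    HasDerivAt (fun y : ℝ => Real.sinh (w * y)) (w * Real.cosh (w * x)) x := by
  have := ((hasDerivAt_id' x).const_mul w).sinh
  convert this using 1; ring

/-- Inserting the eigenvalue `-ω²` into the free Neumann Schrödinger operator on the
half-line by the double commutation method: `φ̃ = cosh(ωx)/Φ(x)` is an `L²(0,∞)`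
eigenfunction of `-d²/dx² + V` with eigenvalue `-ω²` and Robin boundary condition
`φ̃'(0) + γφ̃(0) = 0`. -/
theorem inserted_eigenvalue_example
    (ω γ : ℝ) (hγ : 0 < γ)
    (Φ : ℝ → ℝ) (hΦ : ∀ x, Φ x = 1 + γ * ∫ t in (0:ℝ)..x, Real.cosh (ω * t) ^ 2)
    (V : ℝ → ℝ) (hV : ∀ x ∈ Set.Ici (0:ℝ),
      V x = -2 * D (fun y => γ * Real.cosh (ω * y) ^ 2 / Φ y) x)
    (φt : ℝ → ℝ) (hφt : ∀ x, φt x = Real.cosh (ω * x) / Φ x) :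
    (¬ ∀ᵐ x ∂(volume.restrict (Set.Ioi (0:ℝ))), φt x = 0) ∧
      MemLp φt 2 (volume.restrict (Set.Ioi (0:ℝ))) ∧
      ContDiffOn ℝ 2 φt (Set.Ici 0) ∧
      (∀ x ∈ Set.Ici (0:ℝ), -(D (D φt) x) + V x * φt x = -ω ^ 2 * φt x) ∧
      D φt 0 + γ * φt 0 = 0 := by
  have hΦf : Φ = Phi ω γ := funext fun x => hΦ x
  subst hΦf
  have hφf : φt = fun x => Real.cosh (ω * x) / Phi ω γ x := funext hφt
  subst hφf
  set P := Phi ω γ with hPdef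
  have hP' : ∀ x, HasDerivAt P (γ * Real.cosh (ω * x) ^ 2) x := hasDerivAt_Phi ω γ
  have hPpos : ∀ x ∈ Ici (0:ℝ), 0 < P x := fun x hx => Phi_pos ω hγ hx
  -- first derivative
  set ψ : ℝ → ℝ := fun x =>
    (ω * Real.sinh (ω * x) * P x - Real.cosh (ω * x) * (γ * Real.cosh (ω * x) ^ 2)) / P x ^ 2
    with hψdef
  have hψ : ∀ x, P x ≠ 0 →
      HasDerivAt (fun x => Real.cosh (ω * x) / P x) (ψ x) x := fun x hx =>
    (hasDerivAt_ch ω x).div (hP' x) hx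
  have hDφt : ∀ x ∈ Ici (0:ℝ),
      D (fun x => Real.cosh (ω * x) / P x) x = ψ x := fun x hx =>
    ((hψ x (hPpos x hx).ne').hasDerivWithinAt).derivWithin (uniqueDiffOn_Ici 0 x hx)
  -- second derivative
  set ψd : ℝ → ℝ := fun x =>
    ((ω ^ 2 * Real.cosh (ω * x) * P x - 2 * γ * ω * Real.sinh (ω * x) * Real.cosh (ω * x) ^ 2)
        * P x
      - 2 * (ω * Real.sinh (ω * x) * P x - γ * Real.cosh (ω * x) ^ 3)
        * (γ * Real.cosh (ω * x) ^ 2)) / P x ^ 3 with hψddef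
  have hψ' : ∀ x, P x ≠ 0 → HasDerivAt ψ (ψd x) x := by
    intro x hx
    have hN : HasDerivAt (fun y : ℝ =>
        ω * Real.sinh (ω * y) * P y - Real.cosh (ω * y) * (γ * Real.cosh (ω * y) ^ 2))
        ((ω * (ω * Real.cosh (ω * x)) * P x + ω * Real.sinh (ω * x) * (γ * Real.cosh (ω * x) ^ 2))
          - ((ω * Real.sinh (ω * x)) * (γ * Real.cosh (ω * x) ^ 2)
            + Real.cosh (ω * x) * (γ * ((2:ℕ) * Real.cosh (ω * x) ^ 1 * (ω * Real.sinh (ω * x)))))) x := by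
      exact (((hasDerivAt_sh ω x).const_mul ω).mul (hP' x)).sub
        ((hasDerivAt_ch ω x).mul (((hasDerivAt_ch ω x).pow 2).const_mul γ))
    have hP2 : HasDerivAt (fun y => P y ^ 2) ((2:ℕ) * P x ^ 1 * (γ * Real.cosh (ω * x) ^ 2)) x :=
      (hP' x).pow 2
    have := hN.div hP2 (pow_ne_zero 2 hx)
    refine this.congr_deriv ?_
    rw [hψddef]
    field_simp
    ring
  have hDDφt : ∀ x ∈ Ici (0:ℝ), D (D (fun x => Real.cosh (ω * x) / P x)) x = ψd x := by
    intro x hx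
    have h1 : D (D (fun x => Real.cosh (ω * x) / P x)) x = derivWithin ψ (Ici 0) x :=
      derivWithin_congr hDφt (hDφt x hx)
    rw [h1]
    exact ((hψ' x (hPpos x hx).ne').hasDerivWithinAt).derivWithin (uniqueDiffOn_Ici 0 x hx)
  -- potential
  set gd : ℝ → ℝ := fun x =>
    (2 * γ * ω * Real.cosh (ω * x) * Real.sinh (ω * x) * P x - γ ^ 2 * Real.cosh (ω * x) ^ 4)
      / P x ^ 2 with hgddef
  have hVval : ∀ x ∈ Ici (0:ℝ), V x = -2 * gd x := by
    intro x hx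
    rw [hV x hx]
    congr 1
    have hg : HasDerivAt (fun y => γ * Real.cosh (ω * y) ^ 2 / P y) (gd x) x := by
      have := (((hasDerivAt_ch ω x).pow 2).const_mul γ).div (hP' x) (hPpos x hx).ne'
      refine this.congr_deriv ?_
      rw [hgddef]
      simp only [Pi.pow_apply]
      field_simp
      ring
    exact (hg.hasDerivWithinAt).derivWithin (uniqueDiffOn_Ici 0 x hx)
  refine ⟨?_, ?_, ?_, ?_, ?_⟩
  · -- nonzero
    intro h
    have hne : (volume.restrict (Ioi (0:ℝ))) ≠ 0 := by
      simp [Measure.restrict_eq_zero, Real.volume_Ioi]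
    haveI : (ae (volume.restrict (Ioi (0:ℝ)))).NeBot := ae_neBot.2 hne
    obtain ⟨x, hx0, hxmem⟩ := (h.and (ae_restrict_mem measurableSet_Ioi)).exists
    have h1 : (0:ℝ) < Real.cosh (ω * x) / P x :=
      div_pos (Real.cosh_pos (ω * x)) (hPpos x (mem_Ici.2 (le_of_lt hxmem)))
    exact absurd hx0 (ne_of_gt h1)
  · -- Memℒp
    have hmeas : AEStronglyMeasurable (fun x => Real.cosh (ω * x) / P x)
        (volume.restrict (Ioi (0:ℝ))) := by
      exact (((contDiff_ch ω).continuous.measurable).div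
        ((contDiff_Phi ω γ).continuous.measurable)).aestronglyMeasurable
    refine (memLp_two_iff_integrable_sq hmeas).2 ?_
    have key : IntegrableOn (fun x => (Real.cosh (ω * x) / P x) ^ 2) (Ioi (0:ℝ)) volume := by
      have hF : ∀ x ∈ Ici (0:ℝ),
          HasDerivAt (fun y => -(γ * P y)⁻¹) ((Real.cosh (ω * x) / P x) ^ 2) x := by
        intro x hx
        have := (((hP' x).const_mul γ).inv ((mul_pos hγ (hPpos x hx)).ne')).neg
        refine this.congr_deriv ?_
        field_simp [hγ.ne', (hPpos x hx).ne']
      have htend : Filter.Tendsto (fun y => -(γ * P y)⁻¹) Filter.atTop (𝓝 0) := by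
        have h1 : Filter.Tendsto (fun y => γ * P y) Filter.atTop Filter.atTop :=
          Filter.Tendsto.const_mul_atTop hγ (tendsto_Phi ω hγ)
        simpa using h1.inv_tendsto_atTop.neg
      exact integrableOn_Ioi_deriv_of_nonneg'
        (fun x hx => hF x hx) (fun x _ => sq_nonneg _) htend
    exact key
  · -- ContDiffOn
    exact ((contDiff_ch ω).contDiffOn).div ((contDiff_Phi ω γ).contDiffOn)
      (fun x hx => (hPpos x hx).ne')
  · -- eigenvalue equation
    intro x hx
    rw [hDDφt x hx, hVval x hx, hψddef, hgddef]
    have hp := (hPpos x hx).ne'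
    field_simp
    ring
  · -- boundary condition
    have h0 : D (fun x => Real.cosh (ω * x) / P x) 0 = ψ 0 := hDφt 0 Set.self_mem_Ici
    rw [h0, hψdef]
    simp [hPdef, Phi_zero]
end

section
/- Let ω ∈ ℝ and γ > 0. Define Φ(x) = 1 + γ∫₀ˣ cosh²(ωt) dt and V(x) = −2 (d/dx)(γcosh²(ωx)/Φ(x)) for x ≥ 0. Then (3/16)∫₀^∞ V(x)² dx = (1/4)γ³ − (3/4)γω² + |ω|³. -/
open MeasureTheory Set

/-!
Write `u = γ cosh²(ωx) = Φ'` and `q = u / Φ = (log Φ)'`, so that `V = -2 q'` on `[0, ∞)`.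
Since `u'' = 2ω²(2u - γ)` and `u'² = 4ω²u(u - γ)`, the function `-q³/3 + q (u'/Φ)/2 + ω²γ/Φ`
is an explicit primitive of `q'²`. It equals `ω²γ - γ³/3` at `0`, and, as `Φ` grows like
`e^{2|ω|x}`, we have `q → 2|ω|`, `u'/Φ → 4ω²` and `1/Φ → 0`, so it tends to `4|ω|³/3`.
-/

open Real Filter Topology

noncomputable def sqDerivPrimitive (a b : ℝ) (Φ u w : ℝ → ℝ) (x : ℝ) : ℝ :=
  -(u x / Φ x) ^ 3 / 3 + u x / Φ x * (w x / Φ x) / 2 + a * b / Φ x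

section SqDerivPrimitive

variable {a b : ℝ} {Φ u w : ℝ → ℝ}

theorem hasDerivAt_sqDerivPrimitive {x : ℝ} (hΦ : HasDerivAt Φ (u x) x)
    (hu : HasDerivAt u (w x) x) (hw : HasDerivAt w (2 * a * (2 * u x - b)) x)
    (hw2 : w x ^ 2 = 4 * a * u x * (u x - b)) (hΦx : Φ x ≠ 0) :
    HasDerivAt (sqDerivPrimitive a b Φ u w) (((w x * Φ x - u x ^ 2) / Φ x ^ 2) ^ 2) x := by
  have hq := hu.div hΦ hΦx
  have hp := hw.div hΦ hΦx
  have hr := (hasDerivAt_const x (a * b)).div hΦ hΦx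
  refine ((((hq.pow 3).neg.div_const 3).add ((hq.mul hp).div_const 2)).add hr
    |>.congr_of_eventuallyEq (.of_forall fun y => ?_)).congr_deriv ?_
  · simp only [sqDerivPrimitive, Pi.add_apply, Pi.div_apply, Pi.neg_apply, Pi.pow_apply,
      Pi.mul_apply]
  · simp only [Pi.div_apply, Nat.cast_ofNat, Nat.add_one_sub_one]
    field_simp
    linear_combination -Φ x ^ 2 * hw2

theorem tendsto_sqDerivPrimitive {l : Filter ℝ} {L M : ℝ}
    (hq : Tendsto (fun x => u x / Φ x) l (𝓝 L)) (hp : Tendsto (fun x => w x / Φ x) l (𝓝 M))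
    (hΦ : Tendsto (fun x => (Φ x)⁻¹) l (𝓝 0)) :
    Tendsto (sqDerivPrimitive a b Φ u w) l (𝓝 (-L ^ 3 / 3 + L * M / 2)) := by
  have h := (((hq.pow 3).neg.div_const 3).add ((hq.mul hp).div_const 2)).add (hΦ.const_mul (a * b))
  rw [mul_zero, add_zero] at h
  exact h.congr fun x => by simp only [sqDerivPrimitive]; ring

end SqDerivPrimitive

theorem Real.tendsto_cosh_mul_exp_neg_atTop :
    Tendsto (fun x => cosh x * exp (-x)) atTop (𝓝 (1 / 2)) := by
  have h := ((tendsto_exp_neg_atTop_nhds_zero.pow 2).const_add 1).div_const 2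
  rw [zero_pow two_ne_zero, add_zero] at h
  refine h.congr fun x => ?_
  have h1 : exp x * exp (-x) = 1 := by rw [← exp_add, add_neg_cancel, exp_zero]
  rw [cosh_eq]
  linear_combination -h1 / 2

theorem Real.tendsto_sinh_mul_exp_neg_atTop :
    Tendsto (fun x => sinh x * exp (-x)) atTop (𝓝 (1 / 2)) := by
  have h := ((tendsto_exp_neg_atTop_nhds_zero.pow 2).const_sub 1).div_const 2
  rw [zero_pow two_ne_zero, sub_zero] at h
  refine h.congr fun x => ?_
  have h1 : exp x * exp (-x) = 1 := by rw [← exp_add, add_neg_cancel, exp_zero]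
  rw [sinh_eq]
  linear_combination -h1 / 2

theorem Real.tendsto_mul_exp_neg_atTop_nhds_zero :
    Tendsto (fun x => x * exp (-x)) atTop (𝓝 0) := by
  simpa using tendsto_pow_mul_exp_neg_atTop_nhds_zero 1

namespace DoubleCommutation

noncomputable def phi (ω γ x : ℝ) : ℝ := 1 + γ * ∫ t in (0:ℝ)..x, cosh (ω * t) ^ 2

variable {ω γ : ℝ}

theorem hasDerivAt_mul_cosh_sq (x : ℝ) :
    HasDerivAt (fun x => γ * cosh (ω * x) ^ 2) (γ * ω * sinh (2 * ω * x)) x := by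
  refine ((((hasDerivAt_id x).const_mul ω).cosh.pow 2).const_mul γ).congr_deriv ?_
  rw [mul_assoc 2, sinh_two_mul]
  simp only [id, Nat.cast_ofNat, mul_one]
  ring

theorem hasDerivAt_mul_sinh_two_mul (x : ℝ) :
    HasDerivAt (fun x => γ * ω * sinh (2 * ω * x))
      (2 * ω ^ 2 * (2 * (γ * cosh (ω * x) ^ 2) - γ)) x := by
  refine (((hasDerivAt_id x).const_mul (2 * ω)).sinh.const_mul (γ * ω)).congr_deriv ?_
  rw [id, mul_one, mul_assoc 2, cosh_two_mul]
  linear_combination 2 * γ * ω ^ 2 * sinh_sq (ω * x)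

theorem sq_mul_sinh_two_mul (x : ℝ) :
    (γ * ω * sinh (2 * ω * x)) ^ 2
      = 4 * ω ^ 2 * (γ * cosh (ω * x) ^ 2) * (γ * cosh (ω * x) ^ 2 - γ) := by
  rw [mul_assoc 2, sinh_two_mul]
  linear_combination 4 * γ ^ 2 * ω ^ 2 * cosh (ω * x) ^ 2 * sinh_sq (ω * x)

theorem phi_zero : phi ω γ 0 = 1 := by
  simp [phi]

theorem hasDerivAt_phi (x : ℝ) : HasDerivAt (phi ω γ) (γ * cosh (ω * x) ^ 2) x :=
  (((by fun_prop : Continuous fun t => cosh (ω * t) ^ 2).integral_hasStrictDerivAt 0 x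
    ).hasDerivAt.const_mul γ).const_add 1

theorem one_add_mul_le_phi (hγ : 0 ≤ γ) {x : ℝ} (hx : 0 ≤ x) : 1 + γ * x ≤ phi ω γ x := by
  have h : ∫ t in (0:ℝ)..x, (1:ℝ) ≤ ∫ t in (0:ℝ)..x, cosh (ω * t) ^ 2 :=
    intervalIntegral.integral_mono_on hx intervalIntegrable_const
      ((by fun_prop : Continuous fun t => cosh (ω * t) ^ 2).intervalIntegrable _ _)
      fun t _ => one_le_pow₀ (one_le_cosh _)
  rw [intervalIntegral.integral_const, smul_eq_mul, mul_one, sub_zero] at h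
  rw [phi]
  linarith [mul_le_mul_of_nonneg_left h hγ]

theorem phi_pos (hγ : 0 ≤ γ) {x : ℝ} (hx : 0 ≤ x) : 0 < phi ω γ x :=
  (one_add_mul_le_phi hγ hx).trans_lt' (by positivity)

theorem tendsto_inv_phi (hγ : 0 < γ) : Tendsto (fun x => (phi ω γ x)⁻¹) atTop (𝓝 0) := by
  refine Tendsto.inv_tendsto_atTop (tendsto_atTop_mono' _ ?_
    (tendsto_atTop_add_const_left _ 1 (tendsto_id.const_mul_atTop hγ)))
  filter_upwards [eventually_ge_atTop 0] with x hx using one_add_mul_le_phi hγ.le hx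

theorem phi_eq_of_ne_zero (hω : ω ≠ 0) (x : ℝ) :
    phi ω γ x = 1 + γ * (x / 2 + sinh (2 * ω * x) / (4 * ω)) := by
  have hderiv (t : ℝ) : HasDerivAt (fun t => t / 2 + sinh (2 * ω * t) / (4 * ω))
      (cosh (ω * t) ^ 2) t := by
    refine (((hasDerivAt_id t).div_const 2).add
      (((hasDerivAt_id t).const_mul (2 * ω)).sinh.div_const (4 * ω))).congr_deriv ?_
    rw [id, mul_one, mul_assoc 2, cosh_two_mul]
    field_simp
    linear_combination 4 * sinh_sq (ω * t)
  rw [phi, intervalIntegral.integral_eq_sub_of_hasDerivAt (fun t _ => hderiv t)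
    ((by fun_prop : Continuous fun t => cosh (ω * t) ^ 2).intervalIntegrable _ _)]
  simp

theorem tendsto_phi_mul_exp_neg (hω : 0 < ω) :
    Tendsto (fun x => phi ω γ x * exp (-(2 * ω * x))) atTop (𝓝 (γ / (8 * ω))) := by
  have hy : Tendsto (fun x => 2 * ω * x) atTop atTop := tendsto_id.const_mul_atTop (by positivity)
  have h := (tendsto_exp_neg_atTop_nhds_zero.comp hy).add
    (((tendsto_mul_exp_neg_atTop_nhds_zero.comp hy).div_const (4 * ω)).add
      (tendsto_sinh_mul_exp_neg_atTop.comp hy |>.div_const (4 * ω)) |>.const_mul γ)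
  rw [show 0 + γ * (0 / (4 * ω) + 1 / 2 / (4 * ω)) = γ / (8 * ω) by ring] at h
  refine h.congr fun x => ?_
  simp only [Function.comp_apply, phi_eq_of_ne_zero hω.ne']
  field_simp
  ring

theorem tendsto_cosh_sq_div_phi (hω : 0 ≤ ω) (hγ : 0 < γ) :
    Tendsto (fun x => γ * cosh (ω * x) ^ 2 / phi ω γ x) atTop (𝓝 (2 * ω)) := by
  rcases hω.eq_or_lt with rfl | hω
  · simpa [div_eq_mul_inv] using (tendsto_inv_phi (ω := 0) hγ).const_mul γ
  have hy : Tendsto (fun x => 2 * ω * x) atTop atTop := tendsto_id.const_mul_atTop (by positivity)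
  have hnum := ((tendsto_cosh_mul_exp_neg_atTop.comp hy).add
    (tendsto_exp_neg_atTop_nhds_zero.comp hy)).const_mul (γ / 2)
  have h := hnum.div (tendsto_phi_mul_exp_neg (γ := γ) hω) (by positivity)
  rw [show γ / 2 * (1 / 2 + 0) / (γ / (8 * ω)) = 2 * ω by field_simp; ring] at h
  refine h.congr fun x => ?_
  simp only [Pi.div_apply, Function.comp_apply]
  rw [← mul_div_mul_right (γ * cosh (ω * x) ^ 2) (phi ω γ x) (exp_pos (-(2 * ω * x))).ne',
    mul_assoc 2, cosh_two_mul]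
  congr 1
  linear_combination γ / 2 * exp (-(2 * (ω * x))) * sinh_sq (ω * x)

theorem tendsto_sinh_div_phi (hω : 0 ≤ ω) (hγ : 0 < γ) :
    Tendsto (fun x => γ * ω * sinh (2 * ω * x) / phi ω γ x) atTop (𝓝 (4 * ω ^ 2)) := by
  rcases hω.eq_or_lt with rfl | hω
  · simp
  have hy : Tendsto (fun x => 2 * ω * x) atTop atTop := tendsto_id.const_mul_atTop (by positivity)
  have h := ((tendsto_sinh_mul_exp_neg_atTop.comp hy).const_mul (γ * ω)).div
    (tendsto_phi_mul_exp_neg (γ := γ) hω) (by positivity)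
  rw [show γ * ω * (1 / 2) / (γ / (8 * ω)) = 4 * ω ^ 2 by field_simp; ring] at h
  refine h.congr fun x => ?_
  simp only [Pi.div_apply, Function.comp_apply]
  rw [← mul_assoc, mul_div_mul_right _ _ (exp_pos _).ne']

end DoubleCommutation

open DoubleCommutation in
/-- Explicit computation of `(3/16)∫₀^∞ V²` for the potential obtained by inserting
the eigenvalue `-ω²` into the free Neumann half-line Schrödinger operator via the
double commutation method. -/
theorem integral_V_squared_example
    (ω γ : ℝ) (hγ : 0 < γ)
    (Φ : ℝ → ℝ) (hΦ : ∀ x, Φ x = 1 + γ * ∫ t in (0:ℝ)..x, Real.cosh (ω * t) ^ 2)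
    (V : ℝ → ℝ) (hV : ∀ x ∈ Set.Ici (0:ℝ),
      V x = -2 * D (fun y => γ * Real.cosh (ω * y) ^ 2 / Φ y) x) :
    3/16 * (∫ x in Set.Ioi (0:ℝ), (V x) ^ 2)
      = 1/4 * γ ^ 3 - 3/4 * γ * ω ^ 2 + |ω| ^ 3 := by
  wlog hω : 0 ≤ ω generalizing ω with H
  · simpa using H (-ω) (by simpa using hΦ) (by simpa using hV) (by linarith)
  obtain rfl : Φ = phi ω γ := funext hΦ
  set u := fun x => γ * cosh (ω * x) ^ 2
  set w := fun x => γ * ω * sinh (2 * ω * x)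
  have hG : ∀ x ∈ Ici (0:ℝ),
      HasDerivAt (fun x => 4 * sqDerivPrimitive (ω ^ 2) γ (phi ω γ) u w x) (V x ^ 2) x := by
    intro x hx
    have hphi : phi ω γ x ≠ 0 := (phi_pos hγ.le hx).ne'
    have hq : HasDerivAt (fun y => γ * cosh (ω * y) ^ 2 / phi ω γ y) _ x :=
      hasDerivAt_mul_cosh_sq x |>.div (hasDerivAt_phi x) hphi
    rw [hV x hx, D, hq.hasDerivWithinAt.derivWithin (uniqueDiffOn_Ici 0 x hx)]
    refine ((hasDerivAt_sqDerivPrimitive (u := u) (w := w) (hasDerivAt_phi x)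
      (hasDerivAt_mul_cosh_sq x) (hasDerivAt_mul_sinh_two_mul x) (sq_mul_sinh_two_mul x)
      hphi).const_mul 4).congr_deriv ?_
    ring
  have hlim := (tendsto_sqDerivPrimitive (a := ω ^ 2) (b := γ) (tendsto_cosh_sq_div_phi hω hγ)
    (tendsto_sinh_div_phi hω hγ) (tendsto_inv_phi hγ)).const_mul 4
  rw [integral_Ioi_of_hasDerivAt_of_nonneg' hG (fun x _ => sq_nonneg _) hlim]
  simp only [sqDerivPrimitive, u, w, phi_zero, mul_zero, cosh_zero, sinh_zero, one_pow, mul_one,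
    div_one, zero_div, add_zero, abs_of_nonneg hω]
  ring
end

section
/- Let σ₀ < 0 and define φ₁(x) = e^{σ₀x} for x ≥ 0. Then φ₁ ∈ L²(0,∞), −φ₁'' = −σ₀²φ₁ on [0,∞), φ₁'(0) = σ₀φ₁(0), |φ₁(0)|²/‖φ₁‖² = −2σ₀, and with σ₁ = σ₀ + |φ₁(0)|²/‖φ₁‖² = −σ₀ one has the equality |−σ₀²|^{3/2} = −(3/4)|−σ₀²|(σ₀ − σ₁) + (1/4)(σ₀³ − σ₁³). -/
open MeasureTheory Set

lemma hda (c x : ℝ) : HasDerivAt (fun x => Real.exp (c * x)) (Real.exp (c * x) * c) x := by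
  simpa using ((hasDerivAt_id x).const_mul c).exp

lemma D_exp (σ₀ : ℝ) {x : ℝ} (hx : x ∈ Set.Ici (0:ℝ)) :
    D (fun x => Real.exp (σ₀ * x)) x = σ₀ * Real.exp (σ₀ * x) := by
  have := (hda σ₀ x).hasDerivWithinAt.derivWithin (uniqueDiffOn_Ici 0 x hx)
  simpa [D, mul_comm] using this

lemma sq_exp (σ₀ x : ℝ) : Real.exp (σ₀ * x) ^ 2 = Real.exp (2 * σ₀ * x) := by
  rw [pow_two, ← Real.exp_add]; ring_nf

lemma integrable_sq_exp (σ₀ : ℝ) (hσ₀ : σ₀ < 0) :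
    IntegrableOn (fun x => Real.exp (σ₀ * x) ^ 2) (Set.Ioi (0:ℝ)) := by
  have h := exp_neg_integrableOn_Ioi 0 (b := -(2*σ₀)) (by linarith)
  refine h.congr_fun (fun x _ => ?_) measurableSet_Ioi
  rw [sq_exp]; ring_nf

lemma integral_sq_exp (σ₀ : ℝ) (hσ₀ : σ₀ < 0) :
    (∫ x in Set.Ioi (0:ℝ), Real.exp (σ₀ * x) ^ 2) = -1 / (2 * σ₀) := by
  have hne : (2:ℝ) * σ₀ ≠ 0 := by nlinarith
  have hderiv : ∀ x ∈ Set.Ici (0:ℝ),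
      HasDerivAt (fun x => Real.exp (2 * σ₀ * x) / (2 * σ₀)) (Real.exp (σ₀ * x) ^ 2) x := by
    intro x _
    have h2 := (hda (2*σ₀) x).div_const (2 * σ₀)
    simpa [mul_div_assoc, mul_div_cancel_right₀ _ hne, sq_exp] using h2
  have h1 : Filter.Tendsto (fun x : ℝ => 2 * σ₀ * x) Filter.atTop Filter.atBot :=
    (Filter.tendsto_const_mul_atBot_of_neg (by linarith)).2 Filter.tendsto_id
  have htend : Filter.Tendsto (fun x => Real.exp (2 * σ₀ * x) / (2 * σ₀)) Filter.atTop (nhds 0) := by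
    simpa using (Real.tendsto_exp_atBot.comp h1).div_const (2 * σ₀)
  have := integral_Ioi_of_hasDerivAt_of_tendsto' hderiv (integrable_sq_exp σ₀ hσ₀) htend
  rw [this]; simp; ring

/-- For the free operator `-d²/dx²` on `L²(0,∞)` with Robin boundary condition
`φ'(0) = σ₀φ(0)`, `σ₀ < 0`, the eigenfunction `φ₁(x) = e^{σ₀x}` of the single negative
eigenvalue `-σ₀²` saturates the improved Lieb–Thirring inequality (with `V = 0`). -/
theorem free_robin_equality
    (σ₀ : ℝ) (hσ₀ : σ₀ < 0)
    (φ₁ : ℝ → ℝ) (hφ₁ : ∀ x, φ₁ x = Real.exp (σ₀ * x))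
    (σ₁ : ℝ) (hσ₁ : σ₁ = σ₀ + (φ₁ 0) ^ 2 / (∫ x in Set.Ioi (0:ℝ), (φ₁ x) ^ 2)) :
    MemLp φ₁ 2 (volume.restrict (Set.Ioi (0:ℝ))) ∧
      (∀ x ∈ Set.Ici (0:ℝ), -(D (D φ₁) x) = -σ₀ ^ 2 * φ₁ x) ∧
      D φ₁ 0 = σ₀ * φ₁ 0 ∧
      (φ₁ 0) ^ 2 / (∫ x in Set.Ioi (0:ℝ), (φ₁ x) ^ 2) = -2 * σ₀ ∧
      σ₁ = -σ₀ ∧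
      |-σ₀ ^ 2| ^ ((3:ℝ)/2)
        = -(3/4) * |-σ₀ ^ 2| * (σ₀ - σ₁) + 1/4 * (σ₀ ^ 3 - σ₁ ^ 3) := by
  have hfe : φ₁ = fun x => Real.exp (σ₀ * x) := funext hφ₁
  subst hfe
  have hratio : (Real.exp (σ₀ * 0)) ^ 2 / (∫ x in Set.Ioi (0:ℝ), (Real.exp (σ₀ * x)) ^ 2)
      = -2 * σ₀ := by
    rw [integral_sq_exp σ₀ hσ₀]
    simp
    field_simp
  have hσ₁' : σ₁ = -σ₀ := by rw [hσ₁]; simp only at hratio ⊢; rw [hratio]; ring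
  refine ⟨?_, ?_, ?_, hratio, hσ₁', ?_⟩
  · rw [memLp_two_iff_integrable_sq]
    · exact (integrable_sq_exp σ₀ hσ₀).congr_fun (fun x _ => rfl) measurableSet_Ioi
        |>.congr (by simp)
    · exact (Real.continuous_exp.comp (continuous_const.mul continuous_id)).aestronglyMeasurable
  · intro x hx
    have h1 : Set.EqOn (D fun x => Real.exp (σ₀ * x)) (fun x => σ₀ * Real.exp (σ₀ * x))
        (Set.Ici 0) := fun y hy => D_exp σ₀ hy
    have h2 : D (D fun x => Real.exp (σ₀ * x)) x
        = derivWithin (fun x => σ₀ * Real.exp (σ₀ * x)) (Set.Ici 0) x :=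
      derivWithin_congr h1 (h1 hx)
    have h3 : derivWithin (fun x => σ₀ * Real.exp (σ₀ * x)) (Set.Ici 0) x
        = σ₀ * (Real.exp (σ₀ * x) * σ₀) :=
      (((hda σ₀ x).const_mul σ₀).hasDerivWithinAt).derivWithin (uniqueDiffOn_Ici 0 x hx)
    rw [h2, h3]; ring
  · rw [D_exp σ₀ (Set.mem_Ici.mpr (le_refl (0:ℝ)))]
  · rw [hσ₁']
    have ht : (0:ℝ) < -σ₀ := by linarith
    have habs : |-σ₀ ^ 2| = (-σ₀) ^ 2 := by rw [abs_neg, abs_pow, abs_of_neg hσ₀]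
    rw [habs]
    have : ((-σ₀) ^ 2) ^ ((3:ℝ)/2) = (-σ₀) ^ (3:ℕ) := by
      rw [← Real.rpow_natCast (-σ₀) 2, ← Real.rpow_mul ht.le, ← Real.rpow_natCast (-σ₀) 3]
      norm_num
    rw [this]; ring
end
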